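/- arXiv:1306.5267 — 11 statements merged into one kernel-verified Lean document; each statement's English description precedes it below -/
import Mathlib

section
/- Let G be a commutative group (written additively), let σ : G → G be a group endomorphism, let h ∈ G, and define ψ : G → G by ψ(g) = σ(g) + h. Let Γ be a finite subgroup of the automorphism group of G such that for every γ ∈ Γ there exists γ′ ∈ Γ with ψ ∘ γ = γ′ ∘ ψ. Fix n ≥ 1 and assume that for every γ ∈ Γ the endomorphism σⁿ − γ (sending g to σⁿ(g) − γ(g)) is surjective with finite kernel. Let S = {g ∈ G : ψⁿ(g) = γ(g) for some γ ∈ Γ}, where ψⁿ is the n-fold iterate of ψ. Then Γ maps S to itself, S has finitely many Γ-orbits, and |Γ| · (number of Γ-orbits of S) = Σ_{γ ∈ Γ} #ker(σⁿ − γ). -/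
lemma nat_card_sigma' {ι : Type*} [Fintype ι] (f : ι → Type*) [∀ i, Finite (f i)] :
    Nat.card (Σ i, f i) = ∑ i, Nat.card (f i) := by
  letI : ∀ i, Fintype (f i) := fun i => Fintype.ofFinite _
  simp [Nat.card_eq_fintype_card]

lemma aux_count {G : Type*} [AddCommGroup G] (Γ : AddSubgroup (AddAut G)) [Fintype Γ]
    (F : G → G) (S : Set G) (hSdef : ∀ g, g ∈ S ↔ ∃ γ ∈ Γ, F g = γ g) (hSfin : S.Finite)
    (hstab : ∀ γ ∈ Γ, ∀ g ∈ S, γ g ∈ S) :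
    Fintype.card Γ * {O : Set G | ∃ g ∈ S, O = {x : G | ∃ γ ∈ Γ, γ g = x}}.ncard
      = ∑ γ : Γ, Nat.card {g : G | F g = (γ : AddAut G) g} := by
  classical
  letI : Fintype ↥S := hSfin.fintype
  letI act : AddAction Γ ↥S :=
    { vadd := fun γ g => ⟨(γ : AddAut G) g.1, hstab γ γ.2 g.1 g.2⟩
      zero_vadd := fun g => Subtype.ext rfl
      add_vadd := fun γ δ g => Subtype.ext rfl }
  have smul_coe : ∀ (γ : Γ) (g : ↥S), ((γ +ᵥ g : ↥S) : G) = (γ : AddAut G) g.1 := fun _ _ => rfl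
  have hmem : ∀ g : ↥S, ∃ γ : Γ, F g.1 = (γ : AddAut G) g.1 := fun g => by
    obtain ⟨γ, hγ, hgg⟩ := (hSdef g.1).mp g.2; exact ⟨⟨γ, hγ⟩, hgg⟩
  choose γ₀ hγ₀ using hmem
  -- pair equivalence
  have E : {p : Γ × ↥S // F p.2.1 = (p.1 : AddAut G) p.2.1} ≃
      {p : Γ × ↥S // p.1 +ᵥ p.2 = p.2} :=
    { toFun := fun p => ⟨(-(γ₀ p.1.2) + p.1.1, p.1.2), Subtype.ext (by
        show (((-(γ₀ p.1.2) + p.1.1 : Γ) : AddAut G)) p.1.2.1 = p.1.2.1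
        have hp := p.2
        rw [AddSubgroup.coe_add]
        show (-(γ₀ p.1.2 : AddAut G)) ((p.1.1 : AddAut G) p.1.2.1) = p.1.2.1
        rw [← hp, hγ₀ p.1.2]
        exact (γ₀ p.1.2 : AddAut G).symm_apply_apply _)⟩
      invFun := fun p => ⟨(γ₀ p.1.2 + p.1.1, p.1.2), by
        show F p.1.2.1 = ((γ₀ p.1.2 + p.1.1 : Γ) : AddAut G) p.1.2.1
        have hp : ((p.1.1 : AddAut G)) p.1.2.1 = p.1.2.1 := congrArg Subtype.val p.2
        rw [AddSubgroup.coe_add]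
        show F p.1.2.1 = (γ₀ p.1.2 : AddAut G) ((p.1.1 : AddAut G) p.1.2.1)
        rw [hp]; exact hγ₀ p.1.2⟩
      left_inv := fun p => Subtype.ext (Prod.ext (by simp) rfl)
      right_inv := fun p => Subtype.ext (Prod.ext (by simp) rfl) }
  -- card of LHS-type equals the sum over γ of solution sets in G
  have cardA : Nat.card {p : Γ × ↥S // F p.2.1 = (p.1 : AddAut G) p.2.1}
      = ∑ γ : Γ, Nat.card {g : G | F g = (γ : AddAut G) g} := by
    rw [Nat.card_congr (Equiv.subtypeProdEquivSigmaSubtype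
      (fun (γ : Γ) (g : ↥S) => F g.1 = (γ : AddAut G) g.1))]
    rw [nat_card_sigma']
    refine Finset.sum_congr rfl fun γ _ => Nat.card_congr ?_
    exact { toFun := fun g => ⟨g.1.1, g.2⟩
            invFun := fun x => ⟨⟨x.1, (hSdef x.1).mpr ⟨γ, γ.2, x.2⟩⟩, x.2⟩
            left_inv := fun g => by ext; rfl
            right_inv := fun x => rfl }
  have cardB : Nat.card {p : Γ × ↥S // p.1 +ᵥ p.2 = p.2}
      = ∑ δ : Γ, Fintype.card (AddAction.fixedBy ↥S δ) := by
    rw [Nat.card_congr (Equiv.subtypeProdEquivSigmaSubtype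
      (fun (δ : Γ) (g : ↥S) => δ +ᵥ g = g))]
    rw [nat_card_sigma']
    exact Finset.sum_congr rfl fun δ _ => Nat.card_eq_fintype_card
  -- Burnside
  have burnside : (∑ δ : Γ, Fintype.card (AddAction.fixedBy ↥S δ))
      = Fintype.card (Quotient (AddAction.orbitRel Γ ↥S)) * Fintype.card Γ :=
    AddAction.sum_card_fixedBy_eq_card_orbits_mul_card_addGroup Γ ↥S
  -- orbit set equivalence
  have orbconst : ∀ a b : ↥S, (AddAction.orbitRel Γ ↥S).r a b →
      {x : G | ∃ γ ∈ Γ, γ a.1 = x} = {x : G | ∃ γ ∈ Γ, γ b.1 = x} := by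
    intro a b hab
    obtain ⟨δ, hδ⟩ := hab
    have hδ' : (δ : AddAut G) b.1 = a.1 := congrArg Subtype.val hδ
    ext x; constructor
    · rintro ⟨γ, hγ, rfl⟩
      exact ⟨γ + ↑δ, add_mem hγ δ.2, by rw [← hδ']; rfl⟩
    · rintro ⟨γ, hγ, rfl⟩
      refine ⟨γ + -(↑δ : AddAut G), add_mem hγ (neg_mem δ.2), ?_⟩
      show (γ : AddAut G) ((-(↑δ : AddAut G)) a.1) = γ b.1
      rw [← hδ']
      exact congrArg γ ((δ : AddAut G).symm_apply_apply b.1)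
  have horb : Nonempty (Quotient (AddAction.orbitRel Γ ↥S) ≃
      {O : Set G | ∃ g ∈ S, O = {x : G | ∃ γ ∈ Γ, γ g = x}}) := by
    refine ⟨Equiv.ofBijective (Quotient.lift
      (fun g : ↥S => (⟨{x : G | ∃ γ ∈ Γ, γ g.1 = x}, ⟨g.1, g.2, rfl⟩⟩ :
        {O : Set G | ∃ g ∈ S, O = {x : G | ∃ γ ∈ Γ, γ g = x}}))
      (fun a b hab => Subtype.ext (orbconst a b hab)) ) ⟨?_, ?_⟩⟩
    · intro a b
      induction a using Quotient.inductionOn with | h a =>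
      induction b using Quotient.inductionOn with | h b =>
      intro hfab
      have hset : {x : G | ∃ γ ∈ Γ, γ a.1 = x} = {x : G | ∃ γ ∈ Γ, γ b.1 = x} :=
        congrArg Subtype.val hfab
      apply Quotient.sound
      have ha : a.1 ∈ {x : G | ∃ γ ∈ Γ, γ a.1 = x} := ⟨0, zero_mem Γ, rfl⟩
      rw [hset] at ha
      obtain ⟨γ, hγ, hx⟩ := ha
      exact ⟨⟨γ, hγ⟩, Subtype.ext hx⟩
    · rintro ⟨O, g, hg, rfl⟩
      exact ⟨⟦⟨g, hg⟩⟧, Subtype.ext rfl⟩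
  -- assemble
  rw [← cardA, Nat.card_congr E, cardB, burnside, mul_comm]
  congr 1
  calc {O : Set G | ∃ g ∈ S, O = {x : G | ∃ γ ∈ Γ, γ g = x}}.ncard
      = Nat.card {O : Set G | ∃ g ∈ S, O = {x : G | ∃ γ ∈ Γ, γ g = x}} :=
        (Nat.card_coe_set_eq _).symm
    _ = Nat.card (Quotient (AddAction.orbitRel Γ ↥S)) := (Nat.card_congr horb.some).symm
    _ = Fintype.card (Quotient (AddAction.orbitRel Γ ↥S)) := Nat.card_eq_fintype_card


/-- Abstract orbit-counting lemma for dynamically affine maps: with `ψ(g) = σ(g) + h`,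
`Γ` a finite subgroup of automorphisms normalizing `ψ` up to `Γ`, `n ≥ 1`, and each
`σⁿ − γ` surjective with finite kernel, the set
`S = {g : ψⁿ(g) = γ(g) for some γ ∈ Γ}` is `Γ`-stable, has finitely many `Γ`-orbits,
and `|Γ| · #(S/Γ) = Σ_{γ ∈ Γ} #ker(σⁿ − γ)`. -/
theorem orbit_count_dynamically_affine
    {G : Type*} [AddCommGroup G] (σ : AddMonoid.End G) (h : G)
    (ψ : G → G) (hψ : ∀ g : G, ψ g = σ g + h)
    (Γ : AddSubgroup (AddAut G)) [Fintype Γ]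
    (hcomp : ∀ γ ∈ Γ, ∃ γ' ∈ Γ, ∀ g : G, ψ (γ g) = γ' (ψ g))
    (n : ℕ) (hn : 1 ≤ n)
    (hsurj : ∀ γ ∈ Γ, Function.Surjective (fun g : G => (σ ^ n) g - γ g))
    (hker : ∀ γ ∈ Γ, {g : G | (σ ^ n) g = γ g}.Finite)
    (S : Set G) (hS : S = {g : G | ∃ γ ∈ Γ, ψ^[n] g = γ g}) :
    (∀ γ ∈ Γ, ∀ g ∈ S, γ g ∈ S) ∧
    {O : Set G | ∃ g ∈ S, O = {x : G | ∃ γ ∈ Γ, γ g = x}}.Finite ∧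
    Fintype.card Γ * {O : Set G | ∃ g ∈ S, O = {x : G | ∃ γ ∈ Γ, γ g = x}}.ncard
      = ∑ γ : Γ, Nat.card {g : G | (σ ^ n) g = (γ : AddAut G) g} := by
  classical
  -- the iterate of an affine map is affine
  obtain ⟨c, hc⟩ : ∃ c : G, ∀ g : G, ψ^[n] g = (σ ^ n) g + c := by
    clear hS hsurj hker hn
    induction n with
    | zero => exact ⟨0, fun g => by simp⟩
    | succ m ih =>
      obtain ⟨c, hc⟩ := ih
      refine ⟨(σ ^ m) h + c, fun g => ?_⟩
      rw [Function.iterate_succ_apply, hψ, hc, map_add, pow_succ]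
      have hmul : ((σ ^ m) * σ) g = (σ ^ m) (σ g) := rfl
      rw [hmul, add_assoc]
  -- the per-γ equivalence between ψⁿ-twisted points and kernels
  have key : ∀ γ ∈ Γ, Nonempty ({g : G // ψ^[n] g = γ g} ≃ {g : G // (σ ^ n) g = γ g}) := by
    intro γ hγ
    obtain ⟨g₀, hg₀⟩ := hsurj γ hγ (-c)
    simp only at hg₀
    have h1 : (σ ^ n) g₀ = γ g₀ - c := by
      rw [sub_eq_iff_eq_add] at hg₀; rw [hg₀]; abel
    refine ⟨{ toFun := fun x => ⟨x.1 - g₀, ?_⟩, invFun := fun y => ⟨y.1 + g₀, ?_⟩,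
              left_inv := fun x => Subtype.ext (by simp),
              right_inv := fun y => Subtype.ext (by simp) }⟩
    · have h2 : (σ ^ n) x.1 = γ x.1 - c := by
        have hx := x.2; rw [hc] at hx; rw [eq_sub_iff_add_eq]; exact hx
      rw [map_sub, map_sub, h1, h2]; abel
    · rw [hc, map_add, map_add, y.2, h1]; abel
  -- each twisted-point set is finite
  have hfin : ∀ γ ∈ Γ, {g : G | ψ^[n] g = γ g}.Finite := by
    intro γ hγ
    have : Finite {g : G // (σ ^ n) g = γ g} := (hker γ hγ).to_subtype
    have : Finite {g : G // ψ^[n] g = γ g} := Finite.of_equiv _ (key γ hγ).some.symm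
    exact Set.finite_coe_iff.mp this
  -- S is finite
  have hSfin : S.Finite := by
    rw [hS]
    refine Set.Finite.subset (Set.Finite.biUnion (Set.toFinite (Γ : Set (AddAut G)))
      (fun γ hγ => hfin γ hγ)) ?_
    rintro g ⟨γ, hγ, hg⟩
    exact Set.mem_biUnion hγ hg
  -- equivariance of ψⁿ
  have hcompn : ∀ γ ∈ Γ, ∃ γ' ∈ Γ, ∀ g : G, ψ^[n] (γ g) = γ' (ψ^[n] g) := by
    clear hc hS hsurj hker hn key hfin hSfin
    induction n with
    | zero => exact fun γ hγ => ⟨γ, hγ, fun g => rfl⟩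
    | succ m ih =>
      intro γ hγ
      obtain ⟨γ', hγ', he'⟩ := ih γ hγ
      obtain ⟨γ'', hγ'', he''⟩ := hcomp γ' hγ'
      exact ⟨γ'', hγ'', fun g => by
        rw [Function.iterate_succ_apply', Function.iterate_succ_apply', he', he'']⟩
  -- part 1 : Γ-stability of S
  have part1 : ∀ γ ∈ Γ, ∀ g ∈ S, γ g ∈ S := by
    rw [hS]
    rintro γ hγ g ⟨δ, hδ, hgδ⟩
    obtain ⟨γ', hγ', he'⟩ := hcompn γ hγ
    refine ⟨γ' + δ + -γ, add_mem (add_mem hγ' hδ) (neg_mem hγ), ?_⟩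
    show ψ^[n] (γ g) = γ' (δ ((-γ) (γ g)))
    rw [he', hgδ]
    exact congrArg (fun x => γ' (δ x)) (γ.symm_apply_apply g).symm
  refine ⟨part1, ?_, ?_⟩
  · -- part 2 : finitely many orbits
    have himg : {O : Set G | ∃ g ∈ S, O = {x : G | ∃ γ ∈ Γ, γ g = x}}
        = (fun g => {x : G | ∃ γ ∈ Γ, γ g = x}) '' S := by
      ext O; constructor
      · rintro ⟨g, hg, rfl⟩; exact ⟨g, hg, rfl⟩
      · rintro ⟨g, hg, rfl⟩; exact ⟨g, hg, rfl⟩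
    rw [himg]
    exact hSfin.image _
  · -- part 3 : the count
    have hSdef : ∀ g, g ∈ S ↔ ∃ γ ∈ Γ, ψ^[n] g = γ g := fun g => by rw [hS]; exact Iff.rfl
    rw [aux_count Γ (ψ^[n]) S hSdef hSfin part1]
    exact Finset.sum_congr rfl fun γ _ => Nat.card_congr (key γ γ.2).some
end

section
/- Let k be an algebraically closed field of characteristic p > 0, let d ≥ 2 be an integer with p ∤ d, and let f ∈ k[X] be a polynomial satisfying f(x + x⁻¹) = x^d + x^{−d} for all nonzero x ∈ k (the d-th Chebyshev polynomial). Then for every n ≥ 1, the set {z ∈ k : f^[n](z) = z} is finite and 2 · #{z ∈ k : f^[n](z) = z} = (dⁿ − 1)/p^{v_p(dⁿ − 1)} + (dⁿ + 1)/p^{v_p(dⁿ + 1)}. -/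
open Polynomial

lemma cheb_card_nthRoots {k : Type*} [Field k] [IsAlgClosed k] (p : ℕ) [Fact p.Prime] [CharP k p]
    (m : ℕ) (hm : 0 < m) :
    (Polynomial.nthRootsFinset m (1 : k)).card = m / p ^ padicValNat p m := by
  classical
  have hp : p.Prime := Fact.out
  set v := m.factorization p with hv
  set m' := m / p ^ v with hm'def
  have hmm : p ^ v * m' = m := Nat.ordProj_mul_ordCompl_eq_self m p
  have hm'pos : 0 < m' := Nat.ordCompl_pos p hm.ne'
  have hpdvd : ¬ p ∣ m' := Nat.not_dvd_ordCompl hp hm.ne'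
  have hcast : (m' : k) ≠ 0 := by
    rw [Ne, CharP.cast_eq_zero_iff k p]; exact hpdvd
  have hset : Polynomial.nthRootsFinset m (1 : k) = Polynomial.nthRootsFinset m' (1 : k) := by
    ext x
    rw [Polynomial.mem_nthRootsFinset hm, Polynomial.mem_nthRootsFinset hm'pos]
    constructor
    · intro h
      have h2 : (x ^ m' - 1) ^ p ^ v = 0 := by
        rw [sub_pow_char_pow, one_pow, ← pow_mul, mul_comm m' (p ^ v), hmm, h, sub_self]
      exact sub_eq_zero.mp (pow_eq_zero_iff (pow_pos hp.pos v).ne' |>.mp h2)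
    · intro h
      calc x ^ m = (x ^ m') ^ p ^ v := by rw [← pow_mul, mul_comm, hmm]
      _ = 1 := by rw [h, one_pow]
  haveI : NeZero ((m' : k)) := ⟨hcast⟩
  obtain ⟨ζ, hζ⟩ := HasEnoughRootsOfUnity.exists_primitiveRoot k m'
  rw [hset, hζ.card_nthRootsFinset, hm'def, hv, Nat.factorization_def m hp]

lemma cheb_key {k : Type*} [Field k] (x y : k) (hx : x ≠ 0) (hy : y ≠ 0)
    (h : y + y⁻¹ = x + x⁻¹) : y = x ∨ y = x⁻¹ := by
  have h2 : (x - y) * (x * y - 1) = 0 := by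
    field_simp at h
    linear_combination -h
  rcases mul_eq_zero.mp h2 with h3 | h3
  · left; exact (sub_eq_zero.mp h3).symm
  · right
    field_simp
    linear_combination h3

lemma cheb_surj {k : Type*} [Field k] [IsAlgClosed k] (z : k) :
    ∃ x : k, x ≠ 0 ∧ x + x⁻¹ = z := by
  obtain ⟨x, hx⟩ := IsAlgClosed.exists_root (X ^ 2 - C z * X + 1 : k[X]) (by
    have h2 : (X ^ 2 - C z * X + 1 : k[X]).natDegree = 2 := by compute_degree!
    exact (Polynomial.natDegree_pos_iff_degree_pos.mp (by omega)).ne')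
  rw [IsRoot, eval_add, eval_sub, eval_pow, eval_mul, eval_X, eval_C, eval_one] at hx
  have hx0 : x ≠ 0 := by
    intro h; rw [h] at hx; simp at hx
  refine ⟨x, hx0, ?_⟩
  field_simp
  linear_combination hx

/-- Affine periodic-point count of the `d`-th Chebyshev polynomial in
characteristic `p > 0` with `p ∤ d`:
`2 · #{z : f^[n](z) = z} = (d^n - 1)/p^(v_p(d^n-1)) + (d^n + 1)/p^(v_p(d^n+1))`. -/
theorem chebyshev_affine_periodic_count
    {k : Type*} [Field k] [IsAlgClosed k] (p : ℕ) [Fact p.Prime] [CharP k p]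
    (d : ℕ) (hd : 2 ≤ d) (hpd : ¬ p ∣ d) (f : Polynomial k)
    (hf : ∀ x : k, x ≠ 0 → f.eval (x + x⁻¹) = x ^ d + x⁻¹ ^ d)
    (n : ℕ) (hn : 1 ≤ n) :
    {z : k | (fun z => f.eval z)^[n] z = z}.Finite ∧
    2 * {z : k | (fun z => f.eval z)^[n] z = z}.ncard
      = (d ^ n - 1) / p ^ padicValNat p (d ^ n - 1)
        + (d ^ n + 1) / p ^ padicValNat p (d ^ n + 1) := by
  classical
  -- iterate formula
  have hiter : ∀ (j : ℕ) (x : k), x ≠ 0 →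
      (fun z => f.eval z)^[j] (x + x⁻¹) = x ^ d ^ j + x⁻¹ ^ d ^ j := by
    intro j
    induction j with
    | zero => intro x hx; simp
    | succ j ih =>
      intro x hx
      rw [Function.iterate_succ_apply]
      have h1 : f.eval (x + x⁻¹) = x ^ d + (x ^ d)⁻¹ := by
        rw [hf x hx, inv_pow]
      simp only [h1]
      rw [ih (x ^ d) (pow_ne_zero d hx), ← pow_mul, ← inv_pow, ← pow_mul,
        ← pow_succ' d j]
  set D := d ^ n with hD
  have hD2 : 2 ≤ D := by
    calc 2 ≤ d := hd
    _ = d ^ 1 := (pow_one d).symm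
    _ ≤ d ^ n := Nat.pow_le_pow_right (by omega) hn
  set m₁ := d ^ n - 1 with hm₁
  set m₂ := d ^ n + 1 with hm₂
  have hm₁pos : 0 < m₁ := by omega
  have hm₂pos : 0 < m₂ := by omega
  have hm₁D : m₁ + 1 = D := by omega
  have hm₂D : m₂ = D + 1 := by omega
  set T₁ := Polynomial.nthRootsFinset m₁ (1 : k) with hT₁
  set T₂ := Polynomial.nthRootsFinset m₂ (1 : k) with hT₂
  set T := T₁ ∪ T₂ with hT
  set φ : k → k := fun x => x + x⁻¹ with hφ
  have hTne : ∀ x ∈ T, x ≠ 0 := by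
    intro x hx
    rcases Finset.mem_union.mp hx with h | h
    · exact Polynomial.ne_zero_of_mem_nthRootsFinset one_ne_zero h
    · exact Polynomial.ne_zero_of_mem_nthRootsFinset one_ne_zero h
  have hTmem : ∀ x : k, x ∈ T ↔ (x ^ m₁ = 1 ∨ x ^ m₂ = 1) := by
    intro x
    rw [hT, Finset.mem_union, Polynomial.mem_nthRootsFinset hm₁pos,
      Polynomial.mem_nthRootsFinset hm₂pos]
  -- T closed under inverses
  have hTinv : ∀ x ∈ T, x⁻¹ ∈ T := by
    intro x hx
    rw [hTmem] at hx ⊢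
    rcases hx with h | h
    · left; rw [inv_pow, h, inv_one]
    · right; rw [inv_pow, h, inv_one]
  -- the periodic set is the image of T under φ
  have hSet : {z : k | (fun z => f.eval z)^[n] z = z} = ↑(T.image φ) := by
    ext z
    simp only [Set.mem_setOf_eq, Finset.coe_image, Set.mem_image, Finset.mem_coe]
    constructor
    · intro hz
      obtain ⟨x, hx0, hxz⟩ := cheb_surj z
      have h1 : x ^ D + (x ^ D)⁻¹ = x + x⁻¹ := by
        rw [← inv_pow]
        calc x ^ D + x⁻¹ ^ D = (fun z => f.eval z)^[n] (x + x⁻¹) := (hiter n x hx0).symm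
        _ = x + x⁻¹ := by rw [hxz]; exact hz
      rcases cheb_key x (x ^ D) hx0 (pow_ne_zero D hx0) h1 with h2 | h2
      · refine ⟨x, ?_, hxz⟩
        rw [hTmem]; left
        have : x ^ m₁ * x = 1 * x := by
          rw [← pow_succ, hm₁D, h2, one_mul]
        exact mul_right_cancel₀ hx0 this
      · refine ⟨x, ?_, hxz⟩
        rw [hTmem]; right
        rw [hm₂D, pow_succ, h2, inv_mul_cancel₀ hx0]
    · rintro ⟨x, hxT, rfl⟩
      have hx0 : x ≠ 0 := hTne x hxT
      show (fun z => f.eval z)^[n] (x + x⁻¹) = x + x⁻¹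
      rw [hiter n x hx0]
      rcases (hTmem x).mp hxT with h | h
      · have h1 : x ^ D = x := by rw [← hm₁D, pow_succ, h, one_mul]
        rw [inv_pow, h1]
      · have h1 : x ^ D = x⁻¹ := by
          have : x ^ D * x = 1 := by rw [← pow_succ, ← hm₂D, h]
          field_simp at this ⊢
          linear_combination this
        rw [inv_pow, h1, inv_inv, add_comm]
  -- fixed points of inversion inside T equal T₁ ∩ T₂
  set Fix := T.filter (fun x => x = x⁻¹) with hFix
  have hFixEq : Fix = T₁ ∩ T₂ := by
    ext x
    rw [hFix, Finset.mem_filter, Finset.mem_inter, hT₁, hT₂,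
      Polynomial.mem_nthRootsFinset hm₁pos, Polynomial.mem_nthRootsFinset hm₂pos]
    constructor
    · rintro ⟨hxT, hxi⟩
      have hx0 : x ≠ 0 := hTne x hxT
      have hsq2 : x ^ 2 = 1 := by
        rw [pow_two]
        nth_rewrite 2 [hxi]
        exact mul_inv_cancel₀ hx0
      have h12 : x ^ m₂ = x ^ m₁ := by
        rw [show m₂ = m₁ + 2 by omega, pow_add, hsq2, mul_one]
      rcases (hTmem x).mp hxT with h | h
      · exact ⟨h, by rw [h12, h]⟩
      · exact ⟨by rw [← h12, h], h⟩
    · rintro ⟨h1, h2⟩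
      have hsq : x * x = 1 := by
        have hh : x ^ m₁ * (x * x) = 1 := by
          rw [← pow_two, ← pow_add, show m₁ + 2 = m₂ by omega, h2]
        rw [h1, one_mul] at hh
        exact hh
      exact ⟨(hTmem x).mpr (Or.inl h1), eq_inv_of_mul_eq_one_left hsq⟩
  -- fiberwise counting: 2 * |image| = |T| + |Fix|
  have hfibers : ∀ z ∈ T.image φ,
      (T.filter (fun x => φ x = z)).card + (Fix.filter (fun x => φ x = z)).card = 2 := by
    intro z hz
    obtain ⟨x₀, hx₀T, hx₀z⟩ := Finset.mem_image.mp hz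
    have hx₀0 : x₀ ≠ 0 := hTne x₀ hx₀T
    have hfib : T.filter (fun x => φ x = z) = {x₀, x₀⁻¹} := by
      ext y
      rw [Finset.mem_filter, Finset.mem_insert, Finset.mem_singleton]
      constructor
      · rintro ⟨hyT, hyz⟩
        exact cheb_key x₀ y hx₀0 (hTne y hyT) (hyz.trans hx₀z.symm)
      · rintro (rfl | rfl)
        · exact ⟨hx₀T, hx₀z⟩
        · refine ⟨hTinv x₀ hx₀T, ?_⟩
          show x₀⁻¹ + x₀⁻¹⁻¹ = z
          rw [inv_inv, add_comm]
          exact hx₀z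
    by_cases hfx : x₀ = x₀⁻¹
    · have h1 : ({x₀, x₀⁻¹} : Finset k) = {x₀} := by rw [← hfx]; simp
      have h2 : Fix.filter (fun x => φ x = z) = {x₀} := by
        ext y
        rw [Finset.mem_filter, hFix, Finset.mem_filter, Finset.mem_singleton]
        constructor
        · rintro ⟨⟨hyT, hyi⟩, hyz⟩
          have : y ∈ T.filter (fun x => φ x = z) := Finset.mem_filter.mpr ⟨hyT, hyz⟩
          rw [hfib, h1, Finset.mem_singleton] at this; exact this
        · rintro rfl
          exact ⟨⟨hx₀T, hfx⟩, hx₀z⟩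
      rw [hfib, h1, h2, Finset.card_singleton]
    · have h2 : Fix.filter (fun x => φ x = z) = ∅ := by
        ext y
        simp only [Finset.mem_filter, Finset.notMem_empty, iff_false, not_and, hFix]
        rintro ⟨hyT, hyi⟩ hyz
        have : y ∈ T.filter (fun x => φ x = z) := Finset.mem_filter.mpr ⟨hyT, hyz⟩
        rw [hfib, Finset.mem_insert, Finset.mem_singleton] at this
        rcases this with rfl | rfl
        · exact hfx hyi
        · exact hfx (by rw [hyi, inv_inv])
      rw [hfib, h2, Finset.card_empty, Finset.card_pair hfx]
  have hcount : 2 * (T.image φ).card = T.card + Fix.card := by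
    have hTc : T.card = ∑ z ∈ T.image φ, (T.filter (fun x => φ x = z)).card :=
      Finset.card_eq_sum_card_fiberwise (fun x hx => Finset.mem_image_of_mem φ hx)
    have hFc : Fix.card = ∑ z ∈ T.image φ, (Fix.filter (fun x => φ x = z)).card :=
      Finset.card_eq_sum_card_fiberwise (fun x hx =>
        Finset.mem_image_of_mem φ (Finset.mem_filter.mp hx).1)
    rw [hTc, hFc, ← Finset.sum_add_distrib, Finset.sum_congr rfl hfibers,
      Finset.sum_const, smul_eq_mul, mul_comm]
  -- assemble
  have hfin : {z : k | (fun z => f.eval z)^[n] z = z}.Finite := by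
    rw [hSet]; exact (T.image φ).finite_toSet
  refine ⟨hfin, ?_⟩
  rw [hSet, Set.ncard_coe_finset, hcount, hFixEq, hT,
    Finset.card_union_add_card_inter, cheb_card_nthRoots p m₁ hm₁pos,
    cheb_card_nthRoots p m₂ hm₂pos]
end

section
/- Let k be an algebraically closed field of characteristic p > 0 and let f ∈ k[X] be a polynomial of degree e ≥ 2 whose formal derivative is identically zero (i.e., f is inseparable). Then for every n ≥ 1, the number of elements z ∈ k with f^[n](z) = z is exactly eⁿ. -/
open Polynomial

lemma eval_iter_aux {k : Type*} [CommSemiring k] (f : Polynomial k) (n : ℕ) (z : k) :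
    ((fun q => f.comp q)^[n] X).eval z = (fun z => f.eval z)^[n] z := by
  induction n with
  | zero => simp
  | succ n ih =>
      rw [Function.iterate_succ_apply', Function.iterate_succ_apply', eval_comp, ih]

lemma natDegree_iter_aux {k : Type*} [Field k] (f : Polynomial k) (n : ℕ) :
    ((fun q => f.comp q)^[n] X).natDegree = f.natDegree ^ n := by
  induction n with
  | zero => simp
  | succ n ih =>
      rw [Function.iterate_succ_apply', natDegree_comp, ih, pow_succ, mul_comm]

/-- An inseparable polynomial `f` of degree `e ≥ 2` over an algebraically closed field
of characteristic `p > 0` has exactly `eⁿ` affine points of period `n`. -/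
theorem inseparable_periodic_count
    {k : Type*} [Field k] [IsAlgClosed k] (p : ℕ) [Fact p.Prime] [CharP k p]
    (f : Polynomial k) (e : ℕ) (he : 2 ≤ e) (hdeg : f.natDegree = e)
    (hder : Polynomial.derivative f = 0) (n : ℕ) (hn : 1 ≤ n) :
    Nat.card {z : k | (fun z => f.eval z)^[n] z = z} = e ^ n := by
  set F : Polynomial k := (fun q => f.comp q)^[n] X with hF
  have hdegF : F.natDegree = e ^ n := by rw [hF, natDegree_iter_aux, hdeg]
  have hderF : derivative F = 0 := by
    obtain ⟨m, rfl⟩ := Nat.exists_eq_add_of_le hn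
    rw [hF, add_comm, Function.iterate_succ_apply', derivative_comp, hder]
    simp
  set P : Polynomial k := F - X with hP
  have hen : 1 < e ^ n := by
    calc 1 < 2 ^ n := Nat.one_lt_two_pow (by omega)
      _ ≤ e ^ n := Nat.pow_le_pow_left he n
  have hdegP : P.natDegree = e ^ n := by
    rw [hP, natDegree_sub_eq_left_of_natDegree_lt, hdegF]
    rw [hdegF, natDegree_X]
    omega
  have hP0 : P ≠ 0 := by
    intro h
    rw [h, natDegree_zero] at hdegP
    omega
  have hderP : derivative P = -1 := by
    rw [hP, derivative_sub, hderF, derivative_X]; ring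
  have hsep : P.Separable := by
    rw [Polynomial.separable_def, hderP]
    exact (isCoprime_one_right).neg_right
  have hcard := Polynomial.card_rootSet_eq_natDegree hsep (IsAlgClosed.splits (k := k) (P.map (algebraMap k k)))
  have hset : {z : k | (fun z => f.eval z)^[n] z = z} = P.rootSet k := by
    ext z
    rw [Polynomial.mem_rootSet_of_ne hP0]
    have : (aeval z : Polynomial k → k) = eval z := Polynomial.coe_aeval_eq_eval z
    rw [this]
    simp only [Set.mem_setOf_eq, hP, eval_sub, eval_X, sub_eq_zero, hF, eval_iter_aux]

  rw [hset, Nat.card_eq_fintype_card]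
  rw [hcard, hdegP]
end

section
/- Let K be a number field, let p be a rational prime, and let 𝔭 be a nonzero prime ideal of the ring of integers 𝒪_K lying over p, with ramification index e of 𝔭 over p. Let x, y ∈ 𝒪_K with x ≠ y, x ∉ 𝔭, y ∉ 𝔭, and x − y ∈ 𝔭; if e + 1 ≥ p − 1, assume moreover that (p − 1) · v_𝔭(x − y) ≥ e + 1. Then for every n ≥ 1, v_𝔭(xⁿ − yⁿ) = v_𝔭(x − y) + e · v_p(n). -/
/-- The `𝔭`-adic valuation of an element of the ring of integers: the largest `M`
with `z ∈ 𝔭^M` (as a supremum in `ℕ`). -/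
noncomputable def idealVal {R : Type*} [CommRing R] (𝔭 : Ideal R) (z : R) : ℕ :=
  sSup {M : ℕ | z ∈ 𝔭 ^ M}

open Finset
set_option linter.unusedSectionVars false

namespace LTEAux


variable {R : Type*} [CommRing R] [IsDomain R] [IsDedekindDomain R]

noncomputable def Ev (𝔭 : Ideal R) (z : R) : ℕ∞ := emultiplicity 𝔭 (Ideal.span {z})

theorem mem_pow_iff (𝔭 : Ideal R) (z : R) (M : ℕ) : z ∈ 𝔭 ^ M ↔ (M : ℕ∞) ≤ Ev 𝔭 z := by
  rw [Ev, ← pow_dvd_iff_le_emultiplicity, Ideal.dvd_iff_le, Ideal.span_singleton_le_iff_mem]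

theorem Ev_eq_iff (𝔭 : Ideal R) (z : R) (c : ℕ) :
    Ev 𝔭 z = (c : ℕ∞) ↔ z ∈ 𝔭 ^ c ∧ z ∉ 𝔭 ^ (c + 1) := by
  rw [Ev, emultiplicity_eq_coe, Ideal.dvd_iff_le, Ideal.dvd_iff_le,
    Ideal.span_singleton_le_iff_mem, Ideal.span_singleton_le_iff_mem]

theorem Ev_ne_top {𝔭 : Ideal R} (hprime : 𝔭.IsPrime) {z : R} (hz : z ≠ 0) : Ev 𝔭 z ≠ ⊤ := by
  refine finiteMultiplicity_iff_emultiplicity_ne_top.1 (FiniteMultiplicity.of_not_isUnit ?_ ?_)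
  · rw [Ideal.isUnit_iff]; exact hprime.ne_top
  · rw [Ne, Ideal.zero_eq_bot, Ideal.span_singleton_eq_bot]; exact hz

theorem Ev_zero {𝔭 : Ideal R} : Ev 𝔭 (0 : R) = ⊤ := by
  rw [Ev, Ideal.span_singleton_eq_bot.2 rfl, ← Ideal.zero_eq_bot, emultiplicity_zero]

theorem idealVal_cast {𝔭 : Ideal R} (hprime : 𝔭.IsPrime) {z : R} (hz : z ≠ 0) :
    ((sSup {M : ℕ | z ∈ 𝔭 ^ M} : ℕ) : ℕ∞) = Ev 𝔭 z := by
  lift Ev 𝔭 z to ℕ using Ev_ne_top hprime hz with k hk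
  have hset : {M : ℕ | z ∈ 𝔭 ^ M} = Set.Iic k := by
    ext M
    rw [Set.mem_setOf_eq, mem_pow_iff, ← hk, Set.mem_Iic, Nat.cast_le]
  rw [hset, csSup_Iic]

theorem Ev_mul {𝔭 : Ideal R} (hP : Prime 𝔭) (a b : R) :
    Ev 𝔭 (a * b) = Ev 𝔭 a + Ev 𝔭 b := by
  rw [Ev, Ev, Ev, ← Ideal.span_singleton_mul_span_singleton, emultiplicity_mul hP]

theorem Ev_eq_zero {𝔭 : Ideal R} {z : R} (hz : z ∉ 𝔭) : Ev 𝔭 z = 0 := by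
  refine emultiplicity_eq_zero.2 fun hdvd => hz ?_
  rwa [Ideal.dvd_iff_le, Ideal.span_singleton_le_iff_mem] at hdvd

theorem Ev_add_eq (𝔭 : Ideal R) {a b : R} {c : ℕ} (ha : Ev 𝔭 a = (c : ℕ∞))
    (hb : b ∈ 𝔭 ^ (c + 1)) : Ev 𝔭 (a + b) = (c : ℕ∞) := by
  rw [Ev_eq_iff] at ha ⊢
  refine ⟨add_mem ha.1 (Ideal.pow_le_pow_right (Nat.le_succ c) hb), fun h => ha.2 ?_⟩
  simpa using sub_mem h hb

section Steps

variable {p : ℕ} (hp : p.Prime) {𝔭 : Ideal R} (hprime : 𝔭.IsPrime)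
  (hover : (p : R) ∈ 𝔭)

include hp hprime hover in
theorem geom_not_mem {x y : R} (hx : x ∉ 𝔭) (hsub : y - x ∈ 𝔭) {n : ℕ} (hpn : ¬ p ∣ n) :
    (∑ i ∈ range n, x ^ i * y ^ (n - 1 - i)) ∉ 𝔭 := by
  intro hS
  have key : ∀ i ∈ range n, x ^ i * y ^ (n - 1 - i) - x ^ (n - 1) ∈ 𝔭 := by
    intro i hi
    rw [mem_range] at hi
    have hrw : x ^ (n - 1) = x ^ i * x ^ (n - 1 - i) := by
      rw [← pow_add]; congr 1; omega
    rw [hrw, ← mul_sub]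
    obtain ⟨c, hc⟩ := sub_dvd_pow_sub_pow y x (n - 1 - i)
    rw [hc]
    exact Ideal.mul_mem_left _ _ (Ideal.mul_mem_right _ _ hsub)
  have hsum := Ideal.sum_mem 𝔭 key
  rw [Finset.sum_sub_distrib, Finset.sum_const, card_range, nsmul_eq_mul] at hsum
  have hnx : (n : R) * x ^ (n - 1) ∈ 𝔭 := by
    have := sub_mem hS hsum
    simpa using this
  rcases hprime.mem_or_mem hnx with hn𝔭 | hx𝔭
  · have hcop : IsCoprime (p : ℤ) (n : ℤ) :=
      Nat.Coprime.isCoprime (hp.coprime_iff_not_dvd.2 hpn)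
    obtain ⟨a, b, hab⟩ := hcop.map (Int.castRingHom R)
    apply hprime.ne_top
    rw [Ideal.eq_top_iff_one, ← hab]
    simp only [eq_intCast, Int.cast_natCast]
    exact add_mem (Ideal.mul_mem_left _ _ hover) (Ideal.mul_mem_left _ _ hn𝔭)
  · exact hx (hprime.mem_of_pow_mem _ hx𝔭)

include hp hprime hover in
theorem stepA (hP : Prime 𝔭) {x y : R} (hx : x ∉ 𝔭) (hsub : x - y ∈ 𝔭) {n : ℕ}
    (hpn : ¬ p ∣ n) : Ev 𝔭 (x ^ n - y ^ n) = Ev 𝔭 (x - y) := by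
  rw [← geom_sum₂_mul, Ev_mul hP,
    Ev_eq_zero (geom_not_mem hp hprime hover hx (neg_sub x y ▸ neg_mem hsub) hpn), zero_add]

include hp hprime hover in
theorem stepB (hP : Prime 𝔭) {x y : R} (hy : y ∉ 𝔭) {e m : ℕ}
    (he : Ev 𝔭 (p : R) = (e : ℕ∞)) (hm : Ev 𝔭 (x - y) = (m : ℕ∞))
    (hm1 : 1 ≤ m) (hcond : e < (p - 1) * m) :
    Ev 𝔭 (x ^ p - y ^ p) = ((m + e : ℕ) : ℕ∞) := by
  obtain ⟨q, rfl⟩ : ∃ q, p = q + 2 := ⟨p - 2, by have := hp.two_le; omega⟩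
  set d := x - y with hd
  have hdm : d ∈ 𝔭 ^ m := (mem_pow_iff 𝔭 d m).2 (le_of_eq hm.symm)
  have hpe : (↑(q + 2) : R) ∈ 𝔭 ^ e := (mem_pow_iff 𝔭 _ e).2 (le_of_eq he.symm)
  have hyn : ∀ k : ℕ, Ev 𝔭 (y ^ k) = 0 := fun k =>
    Ev_eq_zero (fun h => hy (hprime.mem_of_pow_mem _ h))
  -- the main term
  have ha : Ev 𝔭 ((↑(q + 2) : R) * y ^ (q + 1) * d) = ((m + e : ℕ) : ℕ∞) := by
    rw [Ev_mul hP, Ev_mul hP, he, hyn, hm]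
    push_cast
    ring
  -- the remainder term
  have hb : x ^ (q + 2) - y ^ (q + 2) - (↑(q + 2) : R) * y ^ (q + 1) * d
      = ∑ i ∈ range (q + 1), d ^ (i + 2) * y ^ (q + 2 - (i + 2)) * ↑((q + 2).choose (i + 2)) := by
    have hx' : x = d + y := by rw [hd]; ring
    rw [hx', add_pow, Finset.sum_range_succ', Finset.sum_range_succ']
    push_cast [Nat.choose_one_right, Nat.choose_zero_right]
    ring
  have hbmem : (∑ i ∈ range (q + 1), d ^ (i + 2) * y ^ (q + 2 - (i + 2)) * ↑((q + 2).choose (i + 2)))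
      ∈ 𝔭 ^ (m + e + 1) := by
    refine Ideal.sum_mem _ fun i hi => ?_
    rw [mem_range] at hi
    rcases lt_or_eq_of_le (by omega : i + 2 ≤ q + 2) with hlt | heq
    · -- p divides the binomial coefficient
      obtain ⟨c, hc⟩ := hp.dvd_choose_self (by omega) hlt
      have hmem : d ^ 2 * (↑(q + 2) : R) ∈ 𝔭 ^ (m * 2 + e) := by
        rw [pow_add]
        exact Ideal.mul_mem_mul (by rw [pow_mul]; exact Ideal.pow_mem_pow hdm 2) hpe
      have hle : 𝔭 ^ (m * 2 + e) ≤ 𝔭 ^ (m + e + 1) := Ideal.pow_le_pow_right (by omega)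
      have : d ^ (i + 2) * y ^ (q + 2 - (i + 2)) * ↑((q + 2).choose (i + 2))
          = (d ^ i * y ^ (q + 2 - (i + 2)) * (c : R)) * (d ^ 2 * (↑(q + 2) : R)) := by
        rw [hc]; push_cast; ring
      rw [this]
      exact Ideal.mul_mem_left _ _ (hle hmem)
    · -- the top term d ^ p
      have hclt : (q + 2).choose (i + 2) = 1 := by rw [heq]; exact Nat.choose_self _
      have : d ^ (i + 2) * y ^ (q + 2 - (i + 2)) * ↑((q + 2).choose (i + 2)) = d ^ (q + 2) := by
        rw [hclt, heq]; simp
      rw [this]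
      have hmem : d ^ (q + 2) ∈ 𝔭 ^ (m * (q + 2)) := by
        rw [pow_mul]; exact Ideal.pow_mem_pow hdm _
      refine Ideal.pow_le_pow_right ?_ hmem
      have h1 : e < (q + 1) * m := by simpa using hcond
      nlinarith
  have key := Ev_add_eq 𝔭 ha (hb ▸ hbmem)
  have hrw : (↑(q + 2) : R) * y ^ (q + 1) * d
      + (x ^ (q + 2) - y ^ (q + 2) - (↑(q + 2) : R) * y ^ (q + 1) * d)
      = x ^ (q + 2) - y ^ (q + 2) := by ring
  rwa [hrw] at key

include hp hprime hover in
theorem mainE (hP : Prime 𝔭) {e : ℕ} (he : Ev 𝔭 (p : R) = (e : ℕ∞)) :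
    ∀ n : ℕ, 1 ≤ n → ∀ x y : R, x ∉ 𝔭 → y ∉ 𝔭 → x - y ∈ 𝔭 → ∀ m : ℕ,
    Ev 𝔭 (x - y) = (m : ℕ∞) → e < (p - 1) * m →
    Ev 𝔭 (x ^ n - y ^ n) = ((m + e * padicValNat p n : ℕ) : ℕ∞) := by
  haveI : Fact p.Prime := ⟨hp⟩
  intro n
  induction n using Nat.strong_induction_on with
  | _ n IH =>
    intro hn x y hx hy hsub m hm hcond
    by_cases hdvd : p ∣ n
    · obtain ⟨k, rfl⟩ := hdvd
      have hp2 := hp.two_le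
      have hk0 : k ≠ 0 := by rintro rfl; simp at hn
      have hm1 : 1 ≤ m := by
        have h1 : ((1 : ℕ) : ℕ∞) ≤ Ev 𝔭 (x - y) :=
          (mem_pow_iff 𝔭 (x - y) 1).1 (by simpa [pow_one] using hsub)
        rw [hm] at h1
        exact_mod_cast h1
      have hB := stepB hp hprime hover hP hy he hm hm1 hcond
      have hx' : x ^ p ∉ 𝔭 := fun h => hx (hprime.mem_of_pow_mem _ h)
      have hy' : y ^ p ∉ 𝔭 := fun h => hy (hprime.mem_of_pow_mem _ h)
      have hsub' : x ^ p - y ^ p ∈ 𝔭 := by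
        have h1 : ((1 : ℕ) : ℕ∞) ≤ Ev 𝔭 (x ^ p - y ^ p) := by
          rw [hB]; exact_mod_cast (by omega : 1 ≤ m + e)
        simpa [pow_one] using (mem_pow_iff 𝔭 _ 1).2 h1
      have hcond' : e < (p - 1) * (m + e) :=
        lt_of_lt_of_le hcond (Nat.mul_le_mul_left _ (by omega))
      have hklt : k < p * k := by
        have hkpos : 0 < k := Nat.pos_of_ne_zero hk0
        nlinarith
      have hIH := IH k hklt (Nat.pos_of_ne_zero hk0) (x ^ p) (y ^ p) hx' hy' hsub' (m + e) hB hcond'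
      rw [← pow_mul, ← pow_mul] at hIH
      rw [hIH]
      congr 1
      rw [padicValNat.mul (by omega : p ≠ 0) hk0, padicValNat.self hp.one_lt]
      ring
    · rw [stepA hp hprime hover hP hx hsub hdvd, hm, padicValNat.eq_zero_of_not_dvd hdvd]
      simp

end Steps

end LTEAux

/-- "Lifting the exponent" in a number field: for a prime `𝔭` of `𝒪_K` over `p` with
ramification index `e`, and `x, y ∉ 𝔭` with `x ≠ y`, `x − y ∈ 𝔭` (and the extra
hypothesis `(p-1)·v_𝔭(x−y) ≥ e+1` in case `e + 1 ≥ p − 1`), one has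
`v_𝔭(xⁿ − yⁿ) = v_𝔭(x − y) + e·v_p(n)` for all `n ≥ 1`. -/
theorem lifting_the_exponent_number_field
    (K : Type*) [Field K] [NumberField K] (p : ℕ) (hp : p.Prime)
    (𝔭 : Ideal (NumberField.RingOfIntegers K)) (hprime : 𝔭.IsPrime) (hbot : 𝔭 ≠ ⊥)
    (hover : (p : NumberField.RingOfIntegers K) ∈ 𝔭)
    (e : ℕ) (he : idealVal 𝔭 (p : NumberField.RingOfIntegers K) = e)
    (x y : NumberField.RingOfIntegers K) (hne : x ≠ y)
    (hx : x ∉ 𝔭) (hy : y ∉ 𝔭) (hsub : x - y ∈ 𝔭)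
    (hextra : p - 1 ≤ e + 1 → e + 1 ≤ (p - 1) * idealVal 𝔭 (x - y))
    (n : ℕ) (hn : 1 ≤ n) :
    idealVal 𝔭 (x ^ n - y ^ n) = idealVal 𝔭 (x - y) + e * padicValNat p n := by
  have hP : Prime 𝔭 := Ideal.prime_of_isPrime hbot hprime
  have hp0 : (p : NumberField.RingOfIntegers K) ≠ 0 := Nat.cast_ne_zero.mpr hp.ne_zero
  have hd0 : x - y ≠ 0 := sub_ne_zero.2 hne
  have hm : LTEAux.Ev 𝔭 (x - y) = ((idealVal 𝔭 (x - y) : ℕ) : ℕ∞) :=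
    (LTEAux.idealVal_cast hprime hd0).symm
  have he' : LTEAux.Ev 𝔭 ((p : NumberField.RingOfIntegers K)) = (e : ℕ∞) := by
    rw [← he]; exact (LTEAux.idealVal_cast hprime hp0).symm
  have hm1 : 1 ≤ idealVal 𝔭 (x - y) := by
    have h1 : ((1 : ℕ) : ℕ∞) ≤ LTEAux.Ev 𝔭 (x - y) :=
      (LTEAux.mem_pow_iff 𝔭 _ 1).1 (by simpa using hsub)
    rw [hm] at h1
    exact_mod_cast h1
  have hcond : e < (p - 1) * idealVal 𝔭 (x - y) := by
    rcases le_or_gt (p - 1) (e + 1) with h | h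
    · exact lt_of_lt_of_le (Nat.lt_succ_self e) (hextra h)
    · calc e < e + 2 := by omega
        _ ≤ p - 1 := by omega
        _ = (p - 1) * 1 := (mul_one _).symm
        _ ≤ (p - 1) * idealVal 𝔭 (x - y) := Nat.mul_le_mul_left _ hm1
  have hmain := LTEAux.mainE hp hprime hover hP he' n hn x y hx hy hsub _ hm hcond
  have hne' : x ^ n - y ^ n ≠ 0 := by
    intro h
    rw [h, LTEAux.Ev_zero] at hmain
    exact ENat.coe_ne_top _ hmain.symm
  have hfinal : ((idealVal 𝔭 (x ^ n - y ^ n) : ℕ) : ℕ∞)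
      = ((idealVal 𝔭 (x - y) + e * padicValNat p n : ℕ) : ℕ∞) := by
    rw [show ((idealVal 𝔭 (x ^ n - y ^ n) : ℕ) : ℕ∞) = LTEAux.Ev 𝔭 (x ^ n - y ^ n) from
      LTEAux.idealVal_cast hprime hne', hmain]
  exact_mod_cast hfinal
end

section
/- Let k be an algebraically closed field of characteristic p > 0 and let g ∈ k[X] be an additive polynomial (g(X) = Σ_i a_i X^{p^i}) with a_0 = 1 and g ≠ X. For a nonzero additive polynomial h write v_φ(h) = min{i : coefficient of X^{p^i} in h is nonzero}. Then for every n ≥ 1, the n-fold composite g^[n] satisfies g^[n] ≠ X and v_φ(g^[n](X) − X) = v_φ(g(X) − X) · p^{v_p(n)}. -/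
/-- The `φ`-adic valuation of an additive polynomial `h = Σ aᵢ X^(pⁱ)`:
the least `i` such that the coefficient of `X^(pⁱ)` is nonzero. -/
noncomputable def phiVal {k : Type*} [Semiring k] (p : ℕ) (h : Polynomial k) : ℕ :=
  sInf {i : ℕ | h.coeff (p ^ i) ≠ 0}

open Polynomial Finset

namespace LTEAux

/-- A polynomial is `p`-additive if all coefficients away from `p`-power degrees vanish. -/
def IsAddPoly (p : ℕ) {k : Type*} [Semiring k] (f : Polynomial k) : Prop :=
  ∀ s : ℕ, (∀ j : ℕ, s ≠ p ^ j) → f.coeff s = 0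

lemma isAddPoly_X {k : Type*} [Field k] (p : ℕ) : IsAddPoly p (X : Polynomial k) := by
  intro s hs
  rw [coeff_X]
  exact if_neg (fun h => hs 0 (by simp [← h]))

lemma IsAddPoly.sub {k : Type*} [Field k] {p : ℕ} {f g : Polynomial k} (hf : IsAddPoly p f) (hg : IsAddPoly p g) :
    IsAddPoly p (f - g) := by
  intro s hs
  rw [coeff_sub, hf s hs, hg s hs, sub_zero]

variable {k : Type*} [Field k] (p : ℕ) [Fact p.Prime] [CharP k p]

lemma hp1 : 1 < p := (Fact.out : p.Prime).one_lt

/-- coefficient of a `p^i`-th power. -/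
lemma coeff_pow_p (w : Polynomial k) (i s : ℕ) :
    (w ^ p ^ i).coeff s = (if p ^ i ∣ s then w.coeff (s / p ^ i) else 0) ^ p ^ i := by
  rw [← Polynomial.map_iterateFrobenius_expand (p := p) w i, Polynomial.coeff_map,
    Polynomial.coeff_expand (pow_pos (Fact.out : p.Prime).pos i)]
  have : ∀ x : k, (iterateFrobenius k p i) x = x ^ p ^ i := by
    intro x; rw [iterateFrobenius_def]
  rw [this]

lemma comp_coeff_eq (u w : Polynomial k) (s : ℕ) :
    (u.comp w).coeff s = ∑ e ∈ u.support, u.coeff e * (w ^ e).coeff s := by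
  rw [comp_eq_sum_left, Polynomial.coeff_sum, Polynomial.sum_def]
  exact Finset.sum_congr rfl fun e _ => by rw [coeff_C_mul]

/-- composition is additive in the second argument for additive polynomials. -/
lemma comp_add {u : Polynomial k} (hu : IsAddPoly p u) (A B : Polynomial k) :
    u.comp (A + B) = u.comp A + u.comp B := by
  rw [comp_eq_sum_left, comp_eq_sum_left, comp_eq_sum_left, Polynomial.sum_def,
    Polynomial.sum_def, Polynomial.sum_def, ← Finset.sum_add_distrib]
  refine Finset.sum_congr rfl fun e he => ?_
  obtain ⟨j, rfl⟩ : ∃ j, e = p ^ j := by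
    by_contra h
    push_neg at h
    exact (Polynomial.mem_support_iff.mp he) (hu e h)
  rw [add_pow_char_pow, mul_add]

/-- The additive endomorphism of `k[X]` given by composition with `u`. -/
noncomputable def compEnd {u : Polynomial k} (hu : IsAddPoly p u) :
    AddMonoid.End (Polynomial k) :=
  AddMonoidHom.mk' (fun q => u.comp q) (comp_add p hu)

lemma compEnd_apply {u : Polynomial k} (hu : IsAddPoly p u) (q : Polynomial k) :
    compEnd p hu q = u.comp q := rfl

lemma end_sum_apply {ι : Type*} (s : Finset ι) (f : ι → AddMonoid.End (Polynomial k))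
    (x : Polynomial k) : (∑ i ∈ s, f i) x = ∑ i ∈ s, f i x := by
  induction s using Finset.cons_induction with
  | empty => rfl
  | cons a s ha ih => rw [Finset.sum_cons, Finset.sum_cons, ← ih]; rfl

lemma pow_apply {u : Polynomial k} (hu : IsAddPoly p u) (m : ℕ) :
    ((compEnd p hu) ^ m) X = (u.comp ·)^[m] X := by
  induction m with
  | zero => rfl
  | succ m ih =>
    rw [pow_succ', Function.iterate_succ_apply']
    show compEnd p hu (((compEnd p hu) ^ m) X) = _
    rw [ih, compEnd_apply]

/-- The binomial expansion of the `n`-th composition iterate. -/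
lemma iterate_comp_eq_sum {f : Polynomial k} (hf : IsAddPoly p f) (n : ℕ) :
    (f.comp ·)^[n] X = ∑ m ∈ Finset.range (n + 1),
      ((n.choose m : ℕ) : Polynomial k) * (((f - X).comp ·)^[m] X) := by
  have hu : IsAddPoly p (f - X) := (hf.sub (isAddPoly_X p))
  have hFT : compEnd p hf = compEnd p hu + 1 := by
    refine AddMonoidHom.ext fun q => ?_
    show compEnd p hf q = compEnd p hu q + (1 : AddMonoid.End (Polynomial k)) q
    rw [compEnd_apply, compEnd_apply, AddMonoid.End.one_apply,
      Polynomial.sub_comp, Polynomial.X_comp, sub_add_cancel]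
  have key : (f.comp ·)^[n] X = ∑ m ∈ Finset.range (n + 1),
      ((n.choose m : ℕ) : Polynomial k) * (((f - X).comp ·)^[m] X) :=
    calc (f.comp ·)^[n] X = ((compEnd p hf) ^ n) X := (pow_apply p hf n).symm
    _ = ((compEnd p hu + 1) ^ n) X := by rw [hFT]
    _ = (∑ m ∈ Finset.range (n + 1),
          (compEnd p hu) ^ m * ((n.choose m : ℕ) : AddMonoid.End (Polynomial k))) X := by
        rw [Commute.add_pow (Commute.one_right _)]
        congr 1
        exact Finset.sum_congr rfl fun m _ => by rw [one_pow, mul_one]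
    _ = ∑ m ∈ Finset.range (n + 1),
          ((n.choose m : ℕ) : Polynomial k) * (((f - X : Polynomial k).comp ·)^[m] X) := by
        rw [end_sum_apply]
        refine Finset.sum_congr rfl fun m _ => ?_
        exact calc ((compEnd p hu) ^ m * ((n.choose m : ℕ) : AddMonoid.End (Polynomial k))) X
            = ((compEnd p hu) ^ m) (((n.choose m : ℕ) : AddMonoid.End (Polynomial k)) X) := rfl
          _ = ((compEnd p hu) ^ m) ((n.choose m) • X) := by rw [AddMonoid.End.natCast_apply]
          _ = (n.choose m) • (((compEnd p hu) ^ m) X) := AddMonoidHom.map_nsmul _ _ _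
          _ = ((n.choose m : ℕ) : Polynomial k) * (((f - X : Polynomial k).comp ·)^[m] X) := by
              rw [nsmul_eq_mul, pow_apply]
  exact key

/-- key coefficient computation for compositions. -/
lemma comp_props {u w : Polynomial k} (hu : IsAddPoly p u) (hw : IsAddPoly p w)
    (v d : ℕ) (hou : ∀ i < v, u.coeff (p ^ i) = 0) (how : ∀ i < d, w.coeff (p ^ i) = 0) :
    IsAddPoly p (u.comp w) ∧ (∀ i < v + d, (u.comp w).coeff (p ^ i) = 0) ∧
      (u.comp w).coeff (p ^ (v + d)) = u.coeff (p ^ v) * (w.coeff (p ^ d)) ^ p ^ v := by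
  have hp := (Fact.out : p.Prime)
  have key : ∀ e ∈ u.support, ∃ i, e = p ^ i ∧ v ≤ i := by
    intro e he
    have hne := Polynomial.mem_support_iff.mp he
    obtain ⟨i, rfl⟩ : ∃ i, e = p ^ i := by
      by_contra h; push_neg at h; exact hne (hu _ h)
    refine ⟨i, rfl, ?_⟩
    by_contra h
    exact hne (hou i (lt_of_not_ge h))
  refine ⟨?_, ?_, ?_⟩
  · -- IsAddPoly
    intro s hs
    rw [comp_coeff_eq]
    refine Finset.sum_eq_zero fun e he => ?_
    obtain ⟨i, rfl, hiv⟩ := key e he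
    rw [coeff_pow_p]
    split_ifs with hdvd
    · rw [hw (s / p ^ i) (fun j hj => hs (i + j) (by rw [pow_add, ← hj, Nat.mul_div_cancel' hdvd])),
        zero_pow (pow_ne_zero i hp.ne_zero)]
      ring
    · rw [zero_pow (pow_ne_zero i hp.ne_zero)]; ring
  · -- vanishing below v + d
    intro t ht
    rw [comp_coeff_eq]
    refine Finset.sum_eq_zero fun e he => ?_
    obtain ⟨i, rfl, hiv⟩ := key e he
    rw [coeff_pow_p]
    split_ifs with hdvd
    · have hit : i ≤ t := (Nat.pow_dvd_pow_iff_le_right (hp1 p)).mp hdvd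
      rw [Nat.pow_div hit hp.pos, how (t - i) (by omega),
        zero_pow (pow_ne_zero i hp.ne_zero)]
      ring
    · rw [zero_pow (pow_ne_zero i hp.ne_zero)]; ring
  · -- leading coefficient
    rw [comp_coeff_eq]
    rw [Finset.sum_eq_single (p ^ v)]
    · rw [coeff_pow_p, if_pos (pow_dvd_pow p (Nat.le_add_right v d)),
        Nat.pow_div (Nat.le_add_right v d) hp.pos, Nat.add_sub_cancel_left]
    · intro e he hne
      obtain ⟨i, rfl, hiv⟩ := key e he
      have hiv' : v < i := lt_of_le_of_ne hiv (fun h => hne (by rw [h]))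
      rw [coeff_pow_p]
      split_ifs with hdvd
      · have hit : i ≤ v + d := (Nat.pow_dvd_pow_iff_le_right (hp1 p)).mp hdvd
        rw [Nat.pow_div hit hp.pos, how (v + d - i) (by omega),
          zero_pow (pow_ne_zero i hp.ne_zero)]
        ring
      · rw [zero_pow (pow_ne_zero i hp.ne_zero)]; ring
    · intro h
      rw [Polynomial.notMem_support_iff.mp h, zero_mul]

/-- Properties of composition powers of `u`. -/
lemma U_props {u : Polynomial k} (hu : IsAddPoly p u) (d : ℕ)
    (hod : ∀ i < d, u.coeff (p ^ i) = 0) (hlead : u.coeff (p ^ d) ≠ 0) (m : ℕ) :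
    IsAddPoly p ((u.comp ·)^[m] X) ∧
      (∀ i < m * d, ((u.comp ·)^[m] X).coeff (p ^ i) = 0) ∧
      ((u.comp ·)^[m] X).coeff (p ^ (m * d)) ≠ 0 := by
  induction m with
  | zero =>
    refine ⟨isAddPoly_X p, fun i hi => absurd hi (by omega), ?_⟩
    simp
  | succ m ih =>
    obtain ⟨ih1, ih2, ih3⟩ := ih
    have := comp_props p hu ih1 d (m * d) hod ih2
    rw [Function.iterate_succ_apply']
    refine ⟨this.1, ?_, ?_⟩
    · intro i hi
      have heq : (m + 1) * d = d + m * d := by ring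
      exact this.2.1 i (by omega)
    · have : (u.comp ((u.comp ·)^[m] X)).coeff (p ^ (d + m * d)) =
        u.coeff (p ^ d) * (((u.comp ·)^[m] X).coeff (p ^ (m * d))) ^ p ^ d := this.2.2
      rw [show (m + 1) * d = d + m * d by ring, this]
      exact mul_ne_zero hlead (pow_ne_zero _ ih3)

/-- The key property bundle: `f` additive, linear coefficient 1,
`f - X` of order exactly `d`. -/
def Good (f : Polynomial k) (d : ℕ) : Prop :=
  IsAddPoly p f ∧ f.coeff 1 = 1 ∧ (∀ i < d, (f - X).coeff (p ^ i) = 0) ∧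
    (f - X).coeff (p ^ d) ≠ 0

lemma Wsub_coeff {f : Polynomial k} (hf : IsAddPoly p f) (n s : ℕ) :
    ((f.comp ·)^[n] X - X).coeff s =
      ∑ m ∈ Finset.range n, ((n.choose (m + 1) : ℕ) : k) *
        (((f - X).comp ·)^[m + 1] X).coeff s := by
  rw [iterate_comp_eq_sum p hf, Finset.sum_range_succ']
  simp only [Nat.choose_zero_right, Nat.cast_one, one_mul, Function.iterate_zero_apply,
    add_sub_cancel_right]
  rw [Polynomial.finset_sum_coeff]
  exact Finset.sum_congr rfl fun m _ => by
    rw [← Polynomial.C_eq_natCast, Polynomial.coeff_C_mul]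

lemma good_iterate_not_dvd {f : Polynomial k} {d : ℕ} (hg : Good p f d) (hd : 1 ≤ d)
    {n : ℕ} (hn : ¬ p ∣ n) : Good p ((f.comp ·)^[n] X) d := by
  obtain ⟨hf, hf1, hord, hlead⟩ := hg
  have hn0 : n ≠ 0 := fun h => hn (h ▸ dvd_zero p)
  have hu : IsAddPoly p (f - X) := hf.sub (isAddPoly_X p)
  have hU := U_props p hu d hord hlead
  have hlow : ∀ t < d, ((f.comp ·)^[n] X - X).coeff (p ^ t) = 0 := by
    intro t ht
    rw [Wsub_coeff p hf]
    refine Finset.sum_eq_zero fun m _ => ?_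
    rw [(hU (m + 1)).2.1 t (by nlinarith), mul_zero]
  refine ⟨?_, ?_, hlow, ?_⟩
  · -- IsAddPoly of iterate
    intro s hs
    rw [iterate_comp_eq_sum p hf, Polynomial.finset_sum_coeff]
    refine Finset.sum_eq_zero fun m _ => ?_
    rw [← Polynomial.C_eq_natCast, Polynomial.coeff_C_mul, (hU m).1 s hs, mul_zero]
  · -- linear coefficient
    have h0 := hlow 0 hd
    rw [pow_zero, Polynomial.coeff_sub, Polynomial.coeff_X_one] at h0
    exact sub_eq_zero.mp h0
  · -- leading coefficient
    rw [Wsub_coeff p hf, Finset.sum_eq_single 0]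
    · simp only [Nat.choose_one_right, zero_add]
      refine mul_ne_zero ?_ ?_
      · rw [Ne, CharP.cast_eq_zero_iff k p]
        exact hn
      · have : (1 : ℕ) * d = d := one_mul d
        have := (hU 1).2.2
        rwa [one_mul] at this
    · intro m _ hm
      rw [(hU (m + 1)).2.1 d (by nlinarith [Nat.one_le_iff_ne_zero.mpr hm]), mul_zero]
    · intro h
      exact absurd (Finset.mem_range.mpr (Nat.pos_of_ne_zero hn0)) h

lemma good_iterate_p {f : Polynomial k} {d : ℕ} (hg : Good p f d) (hd : 1 ≤ d) :
    Good p ((f.comp ·)^[p] X) (p * d) := by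
  obtain ⟨hf, hf1, hord, hlead⟩ := hg
  have hp := (Fact.out : p.Prime)
  have hp2 : 2 ≤ p := hp.two_le
  have hu : IsAddPoly p (f - X) := hf.sub (isAddPoly_X p)
  have hU := U_props p hu d hord hlead
  have hcast : ∀ m, m + 1 < p → ((p.choose (m + 1) : ℕ) : k) = 0 := by
    intro m hm
    rw [CharP.cast_eq_zero_iff k p]
    exact hp.dvd_choose_self (Nat.succ_ne_zero m) hm
  have hlow : ∀ t < p * d, ((f.comp ·)^[p] X - X).coeff (p ^ t) = 0 := by
    intro t ht
    rw [Wsub_coeff p hf]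
    refine Finset.sum_eq_zero fun m hm => ?_
    rcases Nat.lt_or_ge (m + 1) p with h | h
    · rw [hcast m h, zero_mul]
    · have hmp : m + 1 = p := le_antisymm (Finset.mem_range.mp hm) h
      rw [← hmp] at ht
      rw [(hU (m + 1)).2.1 t ht, mul_zero]
  refine ⟨?_, ?_, hlow, ?_⟩
  · intro s hs
    rw [iterate_comp_eq_sum p hf, Polynomial.finset_sum_coeff]
    refine Finset.sum_eq_zero fun m _ => ?_
    rw [← Polynomial.C_eq_natCast, Polynomial.coeff_C_mul, (hU m).1 s hs, mul_zero]
  · have h0 := hlow 0 (Nat.mul_pos hp.pos hd)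
    rw [pow_zero, Polynomial.coeff_sub, Polynomial.coeff_X_one] at h0
    exact sub_eq_zero.mp h0
  · rw [Wsub_coeff p hf, Finset.sum_eq_single (p - 1)]
    · have hpp : p - 1 + 1 = p := by omega
      simp only [hpp, Nat.choose_self, Nat.cast_one, one_mul]
      exact (hU p).2.2
    · intro m hm hne
      have : m + 1 < p := by
        have := Finset.mem_range.mp hm
        omega
      rw [hcast m this, zero_mul]
    · intro h
      exact absurd (Finset.mem_range.mpr (by omega)) h

lemma iterate_comp_apply (f : Polynomial k) (a : ℕ) (q : Polynomial k) :
    (f.comp ·)^[a] q = ((f.comp ·)^[a] X).comp q := by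
  induction a with
  | zero => simp
  | succ a ih =>
    rw [Function.iterate_succ_apply', Function.iterate_succ_apply', ih,
      Polynomial.comp_assoc]

lemma iterate_comp_mul (f : Polynomial k) (a b : ℕ) :
    (f.comp ·)^[a * b] X = ((((f.comp ·)^[a]) X).comp ·)^[b] X := by
  rw [Function.iterate_mul]
  induction b with
  | zero => rfl
  | succ b ih =>
    rw [Function.iterate_succ_apply', Function.iterate_succ_apply', ih,
      iterate_comp_apply]

lemma good_iterate_pow {f : Polynomial k} {d : ℕ} (hg : Good p f d) (hd : 1 ≤ d) (E : ℕ) :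
    Good p ((f.comp ·)^[p ^ E] X) (d * p ^ E) := by
  induction E with
  | zero => simpa using hg
  | succ E ih =>
    have hd' : 1 ≤ d * p ^ E := by
      have := pow_pos (Fact.out : p.Prime).pos E
      nlinarith
    have := good_iterate_p p ih hd'
    rw [← iterate_comp_mul] at this
    rw [show p ^ (E + 1) = p ^ E * p by ring]
    rw [show d * (p ^ E * p) = p * (d * p ^ E) by ring]
    exact this

end LTEAux

open Polynomial LTEAux in
/-- "Lifting the exponent" for `𝔾_a`: if `g` is an additive polynomial over an
algebraically closed field of characteristic `p > 0` with linear coefficient `1`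
and `g ≠ X`, then for every `n ≥ 1` the `n`-fold composite `g^[n]` is `≠ X` and
`v_φ(g^[n] − X) = v_φ(g − X) · p^(v_p(n))`. -/
theorem lifting_the_exponent_additive
    {k : Type*} [Field k] [IsAlgClosed k] (p : ℕ) [Fact p.Prime] [CharP k p]
    (g : Polynomial k)
    (hadd : ∀ i : ℕ, g.coeff i ≠ 0 → ∃ j : ℕ, i = p ^ j)
    (h1 : g.coeff 1 = 1) (hgX : g ≠ Polynomial.X)
    (n : ℕ) (hn : 1 ≤ n) :
    (g.comp ·)^[n] Polynomial.X ≠ Polynomial.X ∧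
    phiVal p ((g.comp ·)^[n] Polynomial.X - Polynomial.X)
      = phiVal p (g - Polynomial.X) * p ^ padicValNat p n := by
  have hp : p.Prime := Fact.out
  have hg : IsAddPoly p g := by
    intro s hs
    by_contra h
    obtain ⟨j, hj⟩ := hadd s h
    exact hs j hj
  have hu : IsAddPoly p (g - X) := hg.sub (isAddPoly_X p)
  -- the set defining v = phiVal p (g - X)
  have hSne : {i : ℕ | (g - X).coeff (p ^ i) ≠ (0 : k)}.Nonempty := by
    have hne : g - X ≠ 0 := sub_ne_zero.mpr hgX
    obtain ⟨s, hs⟩ : ∃ s, (g - X).coeff s ≠ 0 := by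
      by_contra hcon
      push_neg at hcon
      exact hne (Polynomial.ext fun s => by rw [hcon s, Polynomial.coeff_zero])
    obtain ⟨j, rfl⟩ : ∃ j, s = p ^ j := by
      by_contra h; push_neg at h; exact hs (hu s h)
    exact ⟨j, hs⟩
  have hvmem : (g - X).coeff (p ^ (phiVal p (g - Polynomial.X))) ≠ 0 := Nat.sInf_mem hSne
  have hvmin : ∀ i < phiVal p (g - Polynomial.X), (g - X).coeff (p ^ i) = 0 := by
    intro i hi
    by_contra h
    have : phiVal p (g - Polynomial.X) ≤ i := Nat.sInf_le h
    omega
  have hv1 : 1 ≤ phiVal p (g - Polynomial.X) := by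
    rcases Nat.eq_zero_or_pos (phiVal p (g - Polynomial.X)) with h | h
    · exfalso
      apply hvmem
      rw [h, pow_zero, Polynomial.coeff_sub, Polynomial.coeff_X_one, h1, sub_self]
    · exact h
  have hgood : Good p g (phiVal p (g - Polynomial.X)) := ⟨hg, h1, hvmin, hvmem⟩
  -- decompose n
  have hn0 : n ≠ 0 := by omega
  have hEf : n.factorization p = padicValNat p n := Nat.factorization_def n hp
  have hfac : p ^ padicValNat p n * (n / p ^ padicValNat p n) = n := by
    rw [← hEf]
    exact Nat.ordProj_mul_ordCompl_eq_self n p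
  have hndvd : ¬ p ∣ (n / p ^ padicValNat p n) := by
    rw [← hEf]
    exact Nat.not_dvd_ordCompl hp hn0
  have hgoodE : Good p ((g.comp ·)^[p ^ padicValNat p n] X)
      (phiVal p (g - Polynomial.X) * p ^ padicValNat p n) :=
    good_iterate_pow p hgood hv1 _
  have hWn : (g.comp ·)^[n] X =
      ((((g.comp ·)^[p ^ padicValNat p n]) X).comp ·)^[n / p ^ padicValNat p n] X := by
    conv_lhs => rw [← hfac]
    rw [iterate_comp_mul]
  have hgoodn : Good p ((g.comp ·)^[n] X)
      (phiVal p (g - Polynomial.X) * p ^ padicValNat p n) := by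
    rw [hWn]
    exact good_iterate_not_dvd p hgoodE
      (le_trans hv1 (Nat.le_mul_of_pos_right _ (pow_pos hp.pos _))) hndvd
  obtain ⟨_, _, hord, hlead⟩ := hgoodn
  constructor
  · intro h
    apply hlead
    rw [h, sub_self, Polynomial.coeff_zero]
  · refine le_antisymm (Nat.sInf_le hlead) ?_
    by_contra h
    push_neg at h
    have hne2 : {i : ℕ | ((g.comp ·)^[n] X - Polynomial.X).coeff (p ^ i) ≠ (0 : k)}.Nonempty :=
      ⟨_, hlead⟩
    have hmem := Nat.sInf_mem hne2
    exact hmem (hord _ h)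
end

section
/- Let p and ℓ be distinct primes. Let a be a positive integer with gcd(a, ℓ) = 1 and a ≢ 1 (mod ℓ). Let α, β be integers with α ≠ 0 and v_p(α) ≤ v_p(β). Then the sequence n ↦ a^{v_p(αn + β)} (mod ℓ) is not eventually periodic: there do not exist c ≥ 1 and N such that for all n ≥ N, a^{v_p(α(n + c) + β)} ≡ a^{v_p(αn + β)} (mod ℓ). -/
private lemma padicValInt_eq_of_dvd_of_not_dvd (p : ℕ) [hp : Fact p.Prime] {z : ℤ} (M : ℕ)
    (h1 : (p : ℤ) ^ M ∣ z) (h2 : ¬ (p : ℤ) ^ (M + 1) ∣ z) :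
    padicValInt p z = M := by
  have hz : z ≠ 0 := by rintro rfl; exact h2 (dvd_zero _)
  have hle : M ≤ padicValInt p z := by
    rcases (padicValInt_dvd_iff M z).mp h1 with h | h
    · exact absurd h hz
    · exact h
  have hlt : padicValInt p z < M + 1 := by
    by_contra hcon
    push_neg at hcon
    exact h2 ((padicValInt_dvd_iff (M + 1) z).mpr (Or.inr hcon))
  omega

/-- For distinct primes `p, ℓ`, `a > 0` with `gcd(a, ℓ) = 1` and `a ≢ 1 (mod ℓ)`,
and integers `α ≠ 0`, `β` with `v_p(α) ≤ v_p(β)`, the sequence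
`n ↦ a^(v_p(αn + β)) mod ℓ` is not eventually periodic. -/
theorem power_val_sequence_not_eventually_periodic
    (p ℓ : ℕ) (hp : p.Prime) (hℓ : ℓ.Prime) (hpℓ : p ≠ ℓ)
    (a : ℕ) (ha : 0 < a) (hgcd : Nat.gcd a ℓ = 1) (ha1 : ¬ a ≡ 1 [MOD ℓ])
    (α β : ℤ) (hα : α ≠ 0)
    (hv : β = 0 ∨ padicValInt p α ≤ padicValInt p β) :
    ¬ ∃ c : ℕ, 1 ≤ c ∧ ∃ N : ℕ, ∀ n : ℕ, N ≤ n →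
      (a : ℤ) ^ padicValInt p (α * ((n : ℤ) + (c : ℤ)) + β)
        ≡ (a : ℤ) ^ padicValInt p (α * (n : ℤ) + β) [ZMOD (ℓ : ℤ)] := by
  haveI : Fact p.Prime := ⟨hp⟩
  rintro ⟨c, hc, N, hper⟩
  set v := padicValInt p α with hvdef
  -- decompose α = p^v * α₀ with p ∤ α₀
  have hαdvd : (p : ℤ) ^ v ∣ α := padicValInt_dvd α
  obtain ⟨α₀, hα₀⟩ := hαdvd
  have hpv_ne : ((p : ℤ) ^ v) ≠ 0 := pow_ne_zero _ (by exact_mod_cast hp.ne_zero)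
  have hα₀ne : α₀ ≠ 0 := by rintro rfl; simp at hα₀; exact hα hα₀
  have hval_α₀ : padicValInt p α₀ = 0 := by
    have := padicValInt.mul (p := p) hpv_ne hα₀ne
    rw [← hα₀] at this
    have hpow : padicValInt p ((p : ℤ) ^ v) = v := by
      rw [show ((p : ℤ) ^ v) = ((p ^ v : ℕ) : ℤ) by push_cast; ring]
      rw [padicValInt.of_nat, padicValNat.prime_pow]
    omega
  have hndvd_α₀ : ¬ (p : ℤ) ∣ α₀ := by
    intro hd
    have : (p : ℤ) ^ 1 ∣ α₀ := by simpa using hd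
    rcases (padicValInt_dvd_iff 1 α₀).mp this with h | h
    · exact hα₀ne h
    · omega
  -- p^v ∣ β
  have hβdvd : (p : ℤ) ^ v ∣ β := by
    rcases hv with rfl | hle
    · exact dvd_zero _
    · exact dvd_trans (pow_dvd_pow _ hle) (padicValInt_dvd β)
  obtain ⟨β₀, hβ₀⟩ := hβdvd
  -- w := v_p(α c)
  have hcℤ : (c : ℤ) ≠ 0 := by exact_mod_cast Nat.one_le_iff_ne_zero.mp hc
  have hαc_ne : α * (c : ℤ) ≠ 0 := mul_ne_zero hα hcℤ
  set w := padicValInt p (α * (c : ℤ)) with hwdef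
  have hw_dvd : (p : ℤ) ^ w ∣ α * (c : ℤ) := padicValInt_dvd _
  have hw_ndvd : ¬ (p : ℤ) ^ (w + 1) ∣ α * (c : ℤ) := by
    intro hd
    rcases (padicValInt_dvd_iff (w + 1) (α * c)).mp hd with h | h
    · exact hαc_ne h
    · omega
  have hvw : v ≤ w := by
    have := padicValInt.mul (p := p) hα hcℤ
    rw [← hwdef, ← hvdef] at this
    omega
  -- key construction: for each M > w - v, find n ≥ N with v_p(αn+β) = v + M
  have key : ∀ M : ℕ, w < v + M → (a : ℤ) ^ w ≡ (a : ℤ) ^ (v + M) [ZMOD (ℓ : ℤ)] := by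
    intro M hM
    set m : ℤ := (p : ℤ) ^ (M + 1) with hmdef
    have hm_pos : (0 : ℤ) < m := by
      have : (0 : ℤ) < p := by exact_mod_cast hp.pos
      positivity
    -- α₀ is coprime to p^(M+1); obtain Bézout coefficients
    have hcop_pα : IsCoprime (p : ℤ) α₀ := by
      rw [Int.isCoprime_iff_gcd_eq_one]
      have : ¬ p ∣ α₀.natAbs := by
        intro hd
        exact hndvd_α₀ (Int.natCast_dvd.mpr hd)
      have := (Nat.Prime.coprime_iff_not_dvd hp).mpr this
      simpa [Int.gcd] using this
    have hcop : IsCoprime α₀ m := (hcop_pα.pow_left).symm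
    obtain ⟨u, w', huw⟩ := hcop
    -- integer solution x to α₀ x + β₀ ≡ p^M  [mod m]
    set x : ℤ := u * ((p : ℤ) ^ M - β₀) with hxdef
    have hxsol : m ∣ (α₀ * x + β₀ - (p : ℤ) ^ M) := by
      have h1 : α₀ * x + β₀ - (p : ℤ) ^ M = (u * α₀ - 1) * ((p : ℤ) ^ M - β₀) := by
        rw [hxdef]; ring
      have h2 : u * α₀ - 1 = -(w' * m) := by linarith [huw]
      rw [h1, h2]
      exact ⟨-(w' * ((p : ℤ) ^ M - β₀)), by ring⟩
    -- choose natural n ≥ N in the residue class of x mod m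
    set n : ℕ := (x % m).toNat + p ^ (M + 1) * N with hndef
    have hxm_nonneg : 0 ≤ x % m := Int.emod_nonneg x (ne_of_gt hm_pos)
    have hnint : (n : ℤ) = x % m + m * N := by
      rw [hndef]; push_cast [Int.toNat_of_nonneg hxm_nonneg]; ring
    have hnN : N ≤ n := by
      have hp1 : 1 ≤ p ^ (M + 1) := Nat.one_le_pow _ _ hp.pos
      have : N ≤ p ^ (M + 1) * N := Nat.le_mul_of_pos_left N (by omega)
      omega
    have hmod : m ∣ ((n : ℤ) - x) := by
      rw [hnint]
      have : x % m - x = -(m * (x / m)) := by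
        have := Int.emod_add_mul_ediv x m
        linarith
      have h2 : x % m + m * N - x = m * ((N : ℤ) - x / m) := by
        rw [show x % m + m * (N : ℤ) - x = (x % m - x) + m * N by ring, this]; ring
      exact ⟨(N : ℤ) - x / m, h2⟩
    -- α₀ * n + β₀ ≡ p^M  [mod p^(M+1)]
    have hcong : ((p : ℤ) ^ (M + 1)) ∣ (α₀ * (n : ℤ) + β₀ - (p : ℤ) ^ M) := by
      rw [← hmdef]
      have : α₀ * (n : ℤ) + β₀ - (p : ℤ) ^ M
          = α₀ * ((n : ℤ) - x) + (α₀ * x + β₀ - (p : ℤ) ^ M) := by ring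
      rw [this]
      exact dvd_add (Dvd.dvd.mul_left hmod α₀) hxsol
    -- valuation of α₀ n + β₀ is exactly M
    have hMdvd : (p : ℤ) ^ M ∣ α₀ * (n : ℤ) + β₀ := by
      have h1 : (p : ℤ) ^ M ∣ (α₀ * (n : ℤ) + β₀ - (p : ℤ) ^ M) :=
        dvd_trans (pow_dvd_pow _ (Nat.le_succ M)) hcong
      have := dvd_add h1 (dvd_refl ((p : ℤ) ^ M))
      simpa using this
    have hMndvd : ¬ (p : ℤ) ^ (M + 1) ∣ α₀ * (n : ℤ) + β₀ := by
      intro hd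
      have : (p : ℤ) ^ (M + 1) ∣ (p : ℤ) ^ M := by
        have := dvd_sub hd hcong
        simpa using this
      have hpd : (p : ℤ) ∣ 1 := by
        have h1 : (p : ℤ) ^ M * (p : ℤ) ∣ (p : ℤ) ^ M * 1 := by
          rw [mul_one, ← pow_succ]; exact this
        exact (mul_dvd_mul_iff_left (pow_ne_zero M (by exact_mod_cast hp.ne_zero : (p:ℤ) ≠ 0))).mp h1
      have := Int.le_of_dvd one_pos hpd
      have := hp.one_lt
      omega
    have hval_inner : padicValInt p (α₀ * (n : ℤ) + β₀) = M :=
      padicValInt_eq_of_dvd_of_not_dvd p M hMdvd hMndvd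
    have hinner_ne : α₀ * (n : ℤ) + β₀ ≠ 0 := by
      rintro h0; exact hMndvd (h0 ▸ dvd_zero _)
    -- v_p(α n + β) = v + M
    have hsum_eq : α * (n : ℤ) + β = (p : ℤ) ^ v * (α₀ * (n : ℤ) + β₀) := by
      rw [hα₀, hβ₀]; ring
    have hval_n : padicValInt p (α * (n : ℤ) + β) = v + M := by
      rw [hsum_eq, padicValInt.mul hpv_ne hinner_ne, hval_inner]
      congr 1
      rw [show ((p : ℤ) ^ v) = ((p ^ v : ℕ) : ℤ) by push_cast; ring]
      rw [padicValInt.of_nat, padicValNat.prime_pow]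
    -- v_p(α (n+c) + β) = w
    have hsum_ne : α * (n : ℤ) + β ≠ 0 := by
      rw [hsum_eq]; exact mul_ne_zero hpv_ne hinner_ne
    have hbig : (p : ℤ) ^ (w + 1) ∣ α * (n : ℤ) + β := by
      have : (p : ℤ) ^ (v + M) ∣ α * (n : ℤ) + β := hval_n ▸ padicValInt_dvd _
      exact dvd_trans (pow_dvd_pow _ (by omega)) this
    have hshift : α * ((n : ℤ) + (c : ℤ)) + β = (α * (n : ℤ) + β) + α * (c : ℤ) := by ring
    have hval_nc : padicValInt p (α * ((n : ℤ) + (c : ℤ)) + β) = w := by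
      apply padicValInt_eq_of_dvd_of_not_dvd p w
      · rw [hshift]
        exact dvd_add (dvd_trans (pow_dvd_pow _ (Nat.le_succ w)) hbig) hw_dvd
      · rw [hshift]
        intro hd
        exact hw_ndvd (by simpa using dvd_sub hd hbig)
    have := hper n hnN
    rw [hval_nc, hval_n] at this
    exact this
  -- apply with M and M+1
  set M : ℕ := w - v + 1 with hMdef
  have h1 := key M (by omega)
  have h2 := key (M + 1) (by omega)
  have h3 : (a : ℤ) ^ (v + M) ≡ (a : ℤ) ^ (v + M + 1) [ZMOD (ℓ : ℤ)] := by
    have := h1.symm.trans h2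
    simpa [add_assoc] using this
  -- convert to Nat.ModEq and cancel
  have h4 : (a ^ (v + M)) ≡ (a ^ (v + M + 1)) [MOD ℓ] := by
    rw [← Int.natCast_modEq_iff]
    push_cast
    exact h3
  have h5 : a ^ (v + M) * 1 ≡ a ^ (v + M) * a [MOD ℓ] := by
    calc a ^ (v + M) * 1 = a ^ (v + M) := by ring
    _ ≡ a ^ (v + M + 1) [MOD ℓ] := h4
    _ = a ^ (v + M) * a := by ring
  have hcop : Nat.gcd ℓ (a ^ (v + M)) = 1 := by
    have : Nat.Coprime a ℓ := hgcd
    exact (Nat.Coprime.pow_left _ this).symm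
  have h6 : (1 : ℕ) ≡ a [MOD ℓ] := Nat.ModEq.cancel_left_of_coprime hcop h5
  exact ha1 h6.symm
end

section
/- Let p be a prime, let d ≥ 2 be an integer, and let α, β be integers with α ≠ 0 and v_p(α) ≤ v_p(β). Then there do not exist c ≥ 1 and N such that for all n ≥ N, v_p(α(n + c) + β) ≡ v_p(αn + β) (mod d). In other words, the sequence n ↦ v_p(αn + β) mod d is not eventually periodic. -/
section aux

variable {p : ℕ} [hF : Fact p.Prime]

private lemma my_val_pp (k : ℕ) : padicValInt p ((p : ℤ) ^ k) = k := by
  rw [padicValInt, Int.natAbs_pow, Int.natAbs_natCast, padicValNat.prime_pow]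

private lemma my_val_pow_mul (m : ℕ) {u : ℤ} (hu : ¬(p : ℤ) ∣ u) :
    padicValInt p ((p : ℤ) ^ m * u) = m := by
  have hu0 : u ≠ 0 := by rintro rfl; exact hu (dvd_zero _)
  have hp0 : ((p : ℤ)) ^ m ≠ 0 :=
    pow_ne_zero _ (Int.natCast_ne_zero.mpr hF.out.ne_zero)
  rw [padicValInt.mul hp0 hu0, padicValInt.eq_zero_of_not_dvd hu, my_val_pp, add_zero]

/-- If `z ≡ p^m [mod p^(m+1)]` then `v_p z = m`. -/
private lemma my_val_eq {z : ℤ} (m : ℕ) (h : (p : ℤ) ^ (m + 1) ∣ z - (p : ℤ) ^ m) :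
    padicValInt p z = m ∧ z ≠ 0 := by
  obtain ⟨t, ht⟩ := h
  have hz : z = (p : ℤ) ^ m * (1 + p * t) := by ring_nf; ring_nf at ht; linarith
  have hnd : ¬(p : ℤ) ∣ (1 + p * t) := by
    intro hdvd
    have : (p : ℤ) ∣ 1 := (dvd_add_right ⟨t, rfl⟩).mp (by rwa [add_comm] at hdvd)
    have := Int.le_of_dvd one_pos this
    have h2 : (2 : ℤ) ≤ p := by exact_mod_cast hF.out.two_le
    linarith
  constructor
  · rw [hz, my_val_pow_mul m hnd]
  · rw [hz]
    refine mul_ne_zero (pow_ne_zero _ (Int.natCast_ne_zero.mpr hF.out.ne_zero)) ?_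
    intro h0; rw [h0] at hnd; exact hnd (dvd_zero _)

/-- Solvability of `a * n + b ≡ 0 [mod p^k]` with `n` a large natural number. -/
private lemma my_solve {a : ℤ} (ha : ¬(p : ℤ) ∣ a) (b : ℤ) (k L : ℕ) :
    ∃ n : ℕ, L ≤ n ∧ (p : ℤ) ^ k ∣ a * n + b := by
  have hcop : IsCoprime a ((p : ℤ) ^ k) :=
    (((Nat.prime_iff_prime_int.mp hF.out).coprime_iff_not_dvd.mpr ha).symm).pow_right
  obtain ⟨u, v, huv⟩ := hcop
  set q : ℤ := (p : ℤ) ^ k with hq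
  have hq0 : 0 < q := pow_pos (by exact_mod_cast hF.out.pos) k
  set n₀ : ℤ := -u * b with hn₀
  have hbase : a * n₀ + b = b * v * q := by
    have : u * a = 1 - v * q := by linarith
    calc a * n₀ + b = b * (1 - u * a) := by ring
      _ = b * v * q := by rw [this]; ring
  set pk : ℕ := p ^ k with hpk
  have hpk1 : 1 ≤ pk := Nat.one_le_iff_ne_zero.mpr (pow_ne_zero _ hF.out.ne_zero)
  set r : ℕ := (n₀ % q).toNat with hr
  refine ⟨r + pk * L, by have := Nat.mul_le_mul_right L hpk1; omega, ?_⟩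
  have hrq : (r : ℤ) = n₀ % q := Int.toNat_of_nonneg (Int.emod_nonneg _ hq0.ne')
  have hcast : ((pk : ℕ) : ℤ) = q := by rw [hpk, hq]; push_cast; ring
  have hdiff : q ∣ ((r + pk * L : ℕ) : ℤ) - n₀ := by
    have : ((r + pk * L : ℕ) : ℤ) - n₀ = q * L - q * (n₀ / q) := by
      push_cast
      rw [hrq, hcast, Int.emod_def]
      ring
    rw [this]
    exact dvd_sub (dvd_mul_right q _) (dvd_mul_right q _)
  have : a * ((r + pk * L : ℕ) : ℤ) + b
      = (a * n₀ + b) + a * (((r + pk * L : ℕ) : ℤ) - n₀) := by ring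
  rw [this, hbase]
  exact dvd_add (dvd_mul_left q _) (Dvd.dvd.mul_left hdiff a)

end aux

/-- For a prime `p`, an integer `d ≥ 2`, and integers `α ≠ 0`, `β` with
`v_p(α) ≤ v_p(β)`, the sequence `n ↦ v_p(αn + β) mod d` is not eventually
periodic. -/
theorem val_sequence_mod_d_not_eventually_periodic
    (p : ℕ) (hp : p.Prime) (d : ℕ) (hd : 2 ≤ d)
    (α β : ℤ) (hα : α ≠ 0)
    (hv : β = 0 ∨ padicValInt p α ≤ padicValInt p β) :
    ¬ ∃ c : ℕ, 1 ≤ c ∧ ∃ N : ℕ, ∀ n : ℕ, N ≤ n →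
      padicValInt p (α * ((n : ℤ) + (c : ℤ)) + β)
        ≡ padicValInt p (α * (n : ℤ) + β) [MOD d] := by
  haveI : Fact p.Prime := ⟨hp⟩
  rintro ⟨c, hc, N, hper⟩
  set a : ℕ := padicValInt p α with ha_def
  obtain ⟨α₁, hα₁⟩ : (p : ℤ) ^ a ∣ α := padicValInt_dvd α
  have hpα₁ : ¬(p : ℤ) ∣ α₁ := by
    intro ⟨w, hw⟩
    have hdvd : (p : ℤ) ^ (a + 1) ∣ α := ⟨w, by rw [hα₁, hw]; ring⟩
    rcases (padicValInt_dvd_iff (a + 1) α).mp hdvd with h | h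
    · exact hα h
    · omega
  obtain ⟨β₁, hβ₁⟩ : (p : ℤ) ^ a ∣ β := (padicValInt_dvd_iff a β).mpr hv
  -- decompose c
  set m : ℕ := padicValInt p (c : ℤ) with hm_def
  obtain ⟨c₁, hc₁⟩ : (p : ℤ) ^ m ∣ (c : ℤ) := padicValInt_dvd _
  have hcz : (c : ℤ) ≠ 0 := by exact_mod_cast Nat.one_le_iff_ne_zero.mp hc
  have hpc₁ : ¬(p : ℤ) ∣ c₁ := by
    intro ⟨w, hw⟩
    have hdvd : (p : ℤ) ^ (m + 1) ∣ (c : ℤ) := ⟨w, by rw [hc₁, hw]; ring⟩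
    rcases (padicValInt_dvd_iff (m + 1) (c : ℤ)).mp hdvd with h | h
    · exact hcz h
    · omega
  -- Step 1: find n ≥ N with v_p(α₁ n + β₁) = m
  obtain ⟨n, hnN, hn⟩ := my_solve (p := p) hpα₁ (β₁ - (p : ℤ) ^ m) (m + 1) N
  have hn' : (p : ℤ) ^ (m + 1) ∣ (α₁ * n + β₁) - (p : ℤ) ^ m := by
    have : (α₁ * n + β₁) - (p : ℤ) ^ m = α₁ * n + (β₁ - (p : ℤ) ^ m) := by ring
    rwa [this]
  obtain ⟨t, ht⟩ := hn'
  obtain ⟨hval1, hz1⟩ : padicValInt p (α₁ * n + β₁) = m ∧ α₁ * n + β₁ ≠ 0 :=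
    my_val_eq m ⟨t, ht⟩
  -- Step 2: find x ≥ 1 with v_p(α₁ (n + x c) + β₁) = m + 1
  have hpac : ¬(p : ℤ) ∣ α₁ * c₁ := fun h =>
    (((Nat.prime_iff_prime_int.mp hp).dvd_mul.mp h).elim hpα₁ hpc₁)
  obtain ⟨x, hx1, hx⟩ := my_solve (p := p) hpac (1 + p * t - p) 2 1
  obtain ⟨hval2, hz2⟩ : padicValInt p (α₁ * ((n : ℤ) + x * c) + β₁) = m + 1 ∧
      α₁ * ((n : ℤ) + x * c) + β₁ ≠ 0 := by
    apply my_val_eq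
    obtain ⟨w, hw⟩ := hx
    refine ⟨w, ?_⟩
    have h1 : α₁ * n + β₁ = (p : ℤ) ^ m + (p : ℤ) ^ (m + 1) * t := by linarith
    calc α₁ * ((n : ℤ) + x * c) + β₁ - (p : ℤ) ^ (m + 1)
        = (α₁ * n + β₁) + α₁ * c₁ * x * (p : ℤ) ^ m - (p : ℤ) ^ (m + 1) := by
          rw [hc₁]; ring
      _ = (p : ℤ) ^ m * (α₁ * c₁ * x + (1 + p * t - p)) := by rw [h1]; ring
      _ = (p : ℤ) ^ m * ((p : ℤ) ^ 2 * w) := by rw [hw]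
      _ = (p : ℤ) ^ (m + 1 + 1) * w := by ring
  -- valuations of the full expressions
  have hpow0 : ((p : ℤ)) ^ a ≠ 0 := pow_ne_zero _ (Int.natCast_ne_zero.mpr hp.ne_zero)
  have hfull1 : padicValInt p (α * (n : ℤ) + β) = a + m := by
    have : α * (n : ℤ) + β = (p : ℤ) ^ a * (α₁ * n + β₁) := by rw [hα₁, hβ₁]; ring
    rw [this, padicValInt.mul hpow0 hz1, my_val_pp, hval1]
  have hfull2 : padicValInt p (α * (((n + x * c : ℕ) : ℤ)) + β) = a + (m + 1) := by
    have : α * (((n + x * c : ℕ) : ℤ)) + β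
        = (p : ℤ) ^ a * (α₁ * ((n : ℤ) + x * c) + β₁) := by
      rw [hα₁, hβ₁]; push_cast; ring
    rw [this, padicValInt.mul hpow0 hz2, my_val_pp, hval2]
  -- periodicity iteration
  have hiter : ∀ y : ℕ, padicValInt p (α * (((n + y * c : ℕ) : ℤ)) + β)
      ≡ padicValInt p (α * (n : ℤ) + β) [MOD d] := by
    intro y
    induction y with
    | zero => simpa using Nat.ModEq.refl _
    | succ y ih =>
      have hNy : N ≤ n + y * c := le_trans hnN (Nat.le_add_right _ _)
      have h := hper (n + y * c) hNy
      have heq1 : ((n + y * c : ℕ) : ℤ) + (c : ℤ) = (((n + (y + 1) * c : ℕ)) : ℤ) := by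
        push_cast; ring
      rw [heq1] at h
      exact h.trans ih
  have hfin := hiter x
  rw [hfull2, hfull1] at hfin
  have hdvd1 : (d : ℤ) ∣ ((a + m : ℕ) : ℤ) - ((a + (m + 1) : ℕ) : ℤ) := hfin.dvd
  have : (d : ℤ) ∣ 1 := by
    have : ((a + m : ℕ) : ℤ) - ((a + (m + 1) : ℕ) : ℤ) = -1 := by push_cast; ring
    rw [this] at hdvd1
    exact (dvd_neg.mp hdvd1)
  have := Int.le_of_dvd one_pos this
  omega
end

section
/- Let a be a positive integer and let p and ℓ be primes with ℓ > p^{a·p^a}. If p is odd, assume gcd(p, ℓ − 1) = 1; if p = 2, assume instead that ℓ ≡ 7 (mod 8). Then the sequence n ↦ p^{a·p^{v_p(n)}} (mod ℓ), defined for n ≥ 1, is not eventually periodic: there do not exist c ≥ 1 and N ≥ 1 such that for all n ≥ N, p^{a·p^{v_p(n + c)}} ≡ p^{a·p^{v_p(n)}} (mod ℓ). -/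
/-- For `a > 0` and primes `p, ℓ` with `ℓ > p^(a·p^a)`, with `gcd(p, ℓ−1) = 1` if `p`
is odd and `ℓ ≡ 7 (mod 8)` if `p = 2`, the sequence `n ↦ p^(a·p^(v_p(n))) mod ℓ`
(for `n ≥ 1`) is not eventually periodic. -/
theorem double_power_val_sequence_not_eventually_periodic
    (a p ℓ : ℕ) (ha : 0 < a) (hp : p.Prime) (hℓ : ℓ.Prime)
    (hbig : p ^ (a * p ^ a) < ℓ)
    (hodd : Odd p → Nat.gcd p (ℓ - 1) = 1)
    (h2 : p = 2 → ℓ % 8 = 7) :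
    ¬ ∃ c : ℕ, 1 ≤ c ∧ ∃ N : ℕ, 1 ≤ N ∧ ∀ n : ℕ, N ≤ n →
      p ^ (a * p ^ padicValNat p (n + c)) ≡ p ^ (a * p ^ padicValNat p n) [MOD ℓ] := by
  rintro ⟨c, hc, N, hN, hper⟩
  haveI : Fact p.Prime := ⟨hp⟩
  haveI : Fact ℓ.Prime := ⟨hℓ⟩
  have hp1 : 1 < p := hp.one_lt
  have hc0 : c ≠ 0 := by omega
  set e := padicValNat p c with he
  -- the value of the sequence at n = p ^ k for k > e
  have key : ∀ k : ℕ, e < k → N ≤ p ^ k →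
      p ^ (a * p ^ e) ≡ p ^ (a * p ^ k) [MOD ℓ] := by
    intro k hk hNk
    have h1 : padicValNat p (p ^ k) = k := padicValNat.prime_pow k
    set m := c / p ^ e with hm
    have hcm : c = p ^ e * m := (Nat.mul_div_cancel' pow_padicValNat_dvd).symm
    have hpm : ¬ p ∣ m := by
      intro hdvd
      have hd1 : p ^ (e + 1) ∣ c := by
        rw [hcm, pow_succ]
        exact mul_dvd_mul_left _ hdvd
      have := (padicValNat_dvd_iff_le hc0).mp hd1
      omega
    have hsplit : p ^ k + c = p ^ e * (p ^ (k - e) + m) := by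
      rw [Nat.mul_add, ← pow_add, Nat.add_sub_cancel' hk.le, ← hcm]
    have hm0 : m ≠ 0 := by
      intro h; rw [h, mul_zero] at hcm; exact hc0 hcm
    have hnd : ¬ p ∣ (p ^ (k - e) + m) := by
      intro hdvd
      have h1' : p ∣ p ^ (k - e) := dvd_pow_self p (by omega)
      exact hpm ((Nat.dvd_add_right h1').mp hdvd)
    have h2k : padicValNat p (p ^ k + c) = e := by
      rw [hsplit, padicValNat.mul (pow_ne_zero _ hp.pos.ne') (by positivity),
        padicValNat.prime_pow, padicValNat.eq_zero_of_not_dvd hnd, add_zero]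
    have := hper (p ^ k) hNk
    rwa [h2k, h1] at this
  set k := e + N + 1 with hk
  have hNk : ∀ j, k ≤ j → N ≤ p ^ j := by
    intro j hj
    calc N ≤ j := by omega
    _ ≤ 2 ^ j := (Nat.lt_two_pow_self (n := j)).le
    _ ≤ p ^ j := Nat.pow_le_pow_left hp1 j
  have hcong : p ^ (a * p ^ k) ≡ p ^ (a * p ^ (k + 1)) [MOD ℓ] :=
    ((key k (by omega) (hNk k le_rfl)).symm).trans (key (k + 1) (by omega) (hNk (k + 1) (by omega)))
  have hz : ((p : ZMod ℓ)) ^ (a * p ^ k) = (p : ZMod ℓ) ^ (a * p ^ (k + 1)) := by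
    have := (ZMod.natCast_eq_natCast_iff _ _ _).mpr hcong
    push_cast at this
    exact this
  have hple : p ≤ p ^ (a * p ^ a) := Nat.le_self_pow (by positivity) p
  have hlp : ¬ ℓ ∣ p := by
    intro hd
    have : ℓ = p := (Nat.prime_dvd_prime_iff_eq hℓ hp).mp hd
    omega
  have hz0 : (p : ZMod ℓ) ≠ 0 := fun h => hlp ((ZMod.natCast_eq_zero_iff _ _).mp h)
  set d := orderOf ((p : ZMod ℓ)) with hd
  have hle : a * p ^ k ≤ a * p ^ (k + 1) :=
    Nat.mul_le_mul_left _ (Nat.pow_le_pow_right (by omega) (by omega))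
  have hone : (p : ZMod ℓ) ^ (a * p ^ (k + 1) - a * p ^ k) = 1 := by
    have h' : (p : ZMod ℓ) ^ (a * p ^ k) * (p : ZMod ℓ) ^ (a * p ^ (k + 1) - a * p ^ k)
        = (p : ZMod ℓ) ^ (a * p ^ k) * 1 := by
      rw [mul_one, ← pow_add, Nat.add_sub_cancel' hle]
      exact hz.symm
    exact mul_left_cancel₀ (pow_ne_zero _ hz0) h'
  have hdd : d ∣ a * p ^ k * (p - 1) := by
    have hdvd := orderOf_dvd_of_pow_eq_one hone
    have heq : a * p ^ (k + 1) - a * p ^ k = a * p ^ k * (p - 1) := by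
      rw [Nat.mul_sub, mul_one, pow_succ, mul_assoc]
    rwa [heq] at hdvd
  have hcop : Nat.Coprime p d := by
    rcases hp.eq_two_or_odd' with hp2 | hpodd
    · subst hp2
      have hl8 := h2 rfl
      have hlne2 : ℓ ≠ 2 := by omega
      have hz0' : (2 : ZMod ℓ) ≠ 0 := by
        intro h; apply hz0; push_cast; exact h
      have hsq : IsSquare (2 : ZMod ℓ) :=
        (ZMod.exists_sq_eq_two_iff hlne2).mpr (Or.inr hl8)
      have hpow : (2 : ZMod ℓ) ^ (ℓ / 2) = 1 := (ZMod.euler_criterion ℓ hz0').mp hsq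
      have hdvd : d ∣ ℓ / 2 := by
        apply orderOf_dvd_of_pow_eq_one
        push_cast
        exact hpow
      have hodd' : Odd (ℓ / 2) := Nat.odd_iff.mpr (by omega)
      exact Nat.Coprime.coprime_dvd_right hdvd (Nat.coprime_two_left.mpr hodd')
    · have hg : Nat.Coprime p (ℓ - 1) := hodd hpodd
      have hdl : d ∣ ℓ - 1 := orderOf_dvd_of_pow_eq_one (ZMod.pow_card_sub_one_eq_one hz0)
      exact Nat.Coprime.coprime_dvd_right hdl hg
  have hcopk : Nat.Coprime d (p ^ k) := ((hcop.pow_left k).symm)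
  have hda : d ∣ a * (p - 1) := by
    apply Nat.Coprime.dvd_of_dvd_mul_left hcopk
    have : p ^ k * (a * (p - 1)) = a * p ^ k * (p - 1) := by ring
    rw [this]
    exact hdd
  have hfin : d ∣ a * p ^ a - a := by
    have h1 : a * (p - 1) ∣ a * (p ^ a - 1) := by
      apply Nat.mul_dvd_mul_left
      have := Nat.sub_dvd_pow_sub_pow p 1 a
      simpa using this
    have heq2 : a * (p ^ a - 1) = a * p ^ a - a := by
      rw [Nat.mul_sub, mul_one]
    exact (hda.trans h1).trans (heq2 ▸ dvd_refl _)
  have hpone : (p : ZMod ℓ) ^ (a * p ^ a - a) = 1 := orderOf_dvd_iff_pow_eq_one.mp hfin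
  have haa : a ≤ a * p ^ a := Nat.le_mul_of_pos_right a (by positivity)
  have hfinal : (p : ZMod ℓ) ^ (a * p ^ a) = (p : ZMod ℓ) ^ a := by
    rw [← Nat.add_sub_cancel' haa, pow_add, hpone, mul_one]
  have hmod : p ^ (a * p ^ a) ≡ p ^ a [MOD ℓ] := by
    apply (ZMod.natCast_eq_natCast_iff _ _ _).mp
    push_cast
    exact hfinal
  have hlt1 : p ^ a < ℓ := lt_of_le_of_lt (Nat.pow_le_pow_right hp.pos haa) hbig
  have heqn : p ^ (a * p ^ a) = p ^ a := by
    have h' := hmod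
    unfold Nat.ModEq at h'
    rwa [Nat.mod_eq_of_lt hbig, Nat.mod_eq_of_lt hlt1] at h'
  have hexp : a * p ^ a = a := Nat.pow_right_injective hp1 heqn
  have h1a : 1 < p ^ a := Nat.one_lt_pow ha.ne' hp1
  have : a * 2 ≤ a * p ^ a := Nat.mul_le_mul_left a h1a
  omega
end

section
/- Let k be an algebraically closed field of characteristic p > 0, let g ∈ k[X] be an additive polynomial (g(X) = Σ_i a_i X^{p^i}) with deg g ≥ 2 and with a_0 ≠ 0, let c ∈ k, and let f(X) = g(X) + c. Assume a_0 = f′(0) is transcendental over the prime field 𝔽_p. For n ≥ 1 set a_n = 1 + #{z ∈ k : f^[n](z) = z}, and let e = deg g. Then the zeta function Z of the sequence (a_n) — the unique formal power series Z ∈ ℚ⟦t⟧ with constant coefficient 1 satisfying t·Z′ = Z · Σ_{n≥1} a_n tⁿ — satisfies Z · (1 − t) · (1 − e·t) = 1; in particular Z is a rational function. -/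
open Polynomial Classical in
/-- A polynomial over an algebraically closed field whose derivative is a nonzero
constant is separable, hence has exactly `natDegree` roots. -/
lemma aux_card_roots {k : Type*} [Field k] [IsAlgClosed k] (Q : Polynomial k)
    (hQn : Q.natDegree ≠ 0) (u : k) (hu : u ≠ 0) (hd : Q.derivative = C u) :
    Nat.card {z : k | Q.eval z = 0} = Q.natDegree := by
  have hQ0 : Q ≠ 0 := fun h => hQn (by simp [h])
  have hsep : Q.Separable :=
    ⟨0, C u⁻¹, by rw [hd, zero_mul, zero_add, ← C_mul, inv_mul_cancel₀ hu, map_one]⟩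
  have hset : {z : k | Q.eval z = 0} = ↑Q.roots.toFinset := by
    ext z; simp [Polynomial.mem_roots, hQ0]
  rw [hset, Nat.card_coe_set_eq, Set.ncard_coe_finset,
    Multiset.toFinset_card_of_nodup (Polynomial.nodup_roots hsep),
    Polynomial.splits_iff_card_roots.mp (IsAlgClosed.splits Q)]

open PowerSeries in
/-- The formal power-series computation: if `a n = 1 + e^n` for all `n ≥ 1`, then the
zeta function is `1/((1-t)(1-et))`. -/
lemma aux_ps (e : ℕ) (a : ℕ → ℕ) (han : ∀ n : ℕ, 1 ≤ n → a n = 1 + e ^ n)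
    (Z : PowerSeries ℚ) (hZ1 : constantCoeff Z = 1)
    (hZ : X * derivative ℚ Z = Z * mk (fun n => if n = 0 then 0 else (a n : ℚ))) :
    Z * (1 - X) * (1 - C (e : ℚ) * X) = 1 := by
  set A := mk (fun n => if n = 0 then 0 else ((a n : ℚ))) with hA
  set B1 : PowerSeries ℚ := mk (fun n => if n = 0 then 0 else 1) with hB1def
  set B2 : PowerSeries ℚ := mk (fun n => if n = 0 then 0 else (e : ℚ) ^ n) with hB2def
  have hAB : A = B1 + B2 := by
    ext n
    simp only [hA, hB1def, hB2def, map_add, coeff_mk]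
    cases n with
    | zero => simp
    | succ m =>
      have := han (m + 1) (by omega)
      simp only [Nat.succ_ne_zero, if_neg, if_false, this]
      push_cast
      ring
  have hB1 : B1 * (1 - X) = X := by
    have : B1 * (1 - X) = B1 - X * B1 := by ring
    rw [this]
    ext n
    rcases n with _ | m
    · simp [hB1def]
    · rw [map_sub, coeff_succ_X_mul]
      rcases m with _ | m <;> simp [hB1def, coeff_X]
  have hB2 : B2 * (1 - C (e : ℚ) * X) = C (e : ℚ) * X := by
    have : B2 * (1 - C (e : ℚ) * X) = B2 - C (e : ℚ) * (X * B2) := by ring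
    rw [this]
    ext n
    rcases n with _ | m
    · simp [hB2def]
    · rw [map_sub, coeff_C_mul, coeff_succ_X_mul, coeff_C_mul]
      rcases m with _ | m <;> simp [hB2def, coeff_X] <;> ring
  have key : A * ((1 - X) * (1 - C (e : ℚ) * X))
      = X * (1 - C (e : ℚ) * X) + (C (e : ℚ) * X) * (1 - X) := by
    rw [hAB]
    linear_combination (1 - C (e : ℚ) * X) * hB1 + (1 - X) * hB2
  have h1 : derivative ℚ (1 - X : ℚ⟦X⟧) = -1 := by
    rw [map_sub]; simp
  have h2 : derivative ℚ (1 - C (e : ℚ) * X : ℚ⟦X⟧) = - C (e : ℚ) := by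
    rw [map_sub, Derivation.leibniz]; simp
  have hXW : X * derivative ℚ (Z * ((1 - X) * (1 - C (e : ℚ) * X))) = 0 := by
    rw [Derivation.leibniz, Derivation.leibniz, smul_eq_mul, smul_eq_mul, smul_eq_mul,
      smul_eq_mul, h1, h2]
    linear_combination ((1 - X) * (1 - C (e : ℚ) * X)) * hZ + Z * key
  have hW' : derivative ℚ (Z * ((1 - X) * (1 - C (e : ℚ) * X))) = 0 := by
    ext n
    have := congrArg (coeff (n + 1)) hXW
    rw [coeff_succ_X_mul, map_zero] at this
    simpa using this
  have hWc : ∀ m : ℕ, coeff (m + 1) (Z * ((1 - X) * (1 - C (e : ℚ) * X))) = 0 := by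
    intro m
    have := congrArg (coeff m) hW'
    rw [coeff_derivative, map_zero] at this
    have hm : ((m : ℚ) + 1) ≠ 0 := by positivity
    exact (mul_eq_zero.mp this).resolve_right hm
  have hfin : Z * ((1 - X) * (1 - C (e : ℚ) * X)) = 1 := by
    ext n
    rcases n with _ | m
    · rw [coeff_zero_eq_constantCoeff]
      simp [map_mul, map_sub, hZ1]
    · rw [hWc m]
      simp [coeff_one]
  rw [mul_assoc]
  exact hfin

open Polynomial in
/-- The counting argument: for `f = g + c` with `g` additive, `g.coeff 1`
transcendental over `𝔽_p` and `deg g = e ≥ 2`, the `n`-th iterate of `f` has exactly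
`e^n` fixed points for every `n ≥ 1`. -/
lemma aux_count_s14 {k : Type*} [Field k] [IsAlgClosed k] (p : ℕ) [Fact p.Prime] [CharP k p]
    [Algebra (ZMod p) k]
    (g : Polynomial k)
    (hadd : ∀ i : ℕ, g.coeff i ≠ 0 → ∃ j : ℕ, i = p ^ j)
    (hdeg : 2 ≤ g.natDegree)
    (htrans : Transcendental (ZMod p) (g.coeff 1))
    (c : k) (f : Polynomial k) (hf : f = g + Polynomial.C c)
    (a : ℕ → ℕ)
    (ha : ∀ n : ℕ, 1 ≤ n → a n = 1 + Nat.card {z : k | (fun z => f.eval z)^[n] z = z})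
    (e : ℕ) (he : e = g.natDegree) :
    ∀ n : ℕ, 1 ≤ n → a n = 1 + e ^ n := by
  set a0 := g.coeff 1 with ha0
  have hgder : g.derivative = C a0 := by
    ext m
    rw [Polynomial.coeff_derivative]
    cases m with
    | zero => simp [ha0]
    | succ m =>
      rw [Polynomial.coeff_C, if_neg (Nat.succ_ne_zero m)]
      by_cases hc : g.coeff (m + 1 + 1) = 0
      · rw [hc, zero_mul]
      · obtain ⟨j, hj⟩ := hadd _ hc
        have hj1 : j ≠ 0 := by rintro rfl; simp at hj
        have hz : ((m + 1 : ℕ) + 1 : k) = 0 := by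
          have : (((m + 1 + 1 : ℕ)) : k) = 0 := by
            rw [hj]
            push_cast
            rw [CharP.cast_eq_zero k p, zero_pow hj1]
          push_cast at this ⊢
          convert this using 2
        rw [hz, mul_zero]
  have hfder : f.derivative = C a0 := by
    rw [hf, derivative_add, derivative_C, add_zero, hgder]
  have hfdeg : f.natDegree = e := by rw [hf, he, natDegree_add_C]
  set F : ℕ → Polynomial k := fun n => (fun q => f.comp q)^[n] X with hF
  have hFsucc : ∀ n, F (n + 1) = f.comp (F n) := by
    intro n; exact Function.iterate_succ_apply' _ _ _
  have hFeval : ∀ (n : ℕ) (z : k), (F n).eval z = (fun z => f.eval z)^[n] z := by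
    intro n; induction n with
    | zero => intro z; simp [hF]
    | succ m ih =>
      intro z
      rw [hFsucc, Polynomial.eval_comp, Function.iterate_succ_apply', ih]
  have hFdeg : ∀ n : ℕ, (F n).natDegree = e ^ n := by
    intro n; induction n with
    | zero => simp [hF]
    | succ m ih => rw [hFsucc, natDegree_comp, hfdeg, ih, pow_succ, mul_comm]
  have hFder : ∀ n : ℕ, (F n).derivative = C (a0 ^ n) := by
    intro n; induction n with
    | zero => simp [hF]
    | succ m ih =>
      rw [hFsucc, Polynomial.derivative_comp, hfder, C_comp, ih, ← C_mul, ← pow_succ]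
  intro n hn
  have he2 : 2 ≤ e := he ▸ hdeg
  have hen : 1 < e ^ n := Nat.one_lt_pow (by omega) (by omega)
  have hne1 : a0 ^ n ≠ 1 := by
    intro h
    apply htrans
    refine ⟨X ^ n - C 1, X_pow_sub_C_ne_zero (by omega) 1, ?_⟩
    simp [h]
  set Q : Polynomial k := F n - X with hQ
  have hQdeg : Q.natDegree = e ^ n := by
    rw [hQ, natDegree_sub_eq_left_of_natDegree_lt, hFdeg]
    rw [hFdeg, natDegree_X]; exact hen
  have hQder : Q.derivative = C (a0 ^ n - 1) := by
    rw [hQ, derivative_sub, hFder, derivative_X, map_sub, map_one]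
  have hcard := aux_card_roots Q (by omega) (a0 ^ n - 1) (sub_ne_zero.mpr hne1) hQder
  have hset : {z : k | (fun z => f.eval z)^[n] z = z} = {z : k | Q.eval z = 0} := by
    ext z
    simp only [Set.mem_setOf_eq, hQ, Polynomial.eval_sub, Polynomial.eval_X, hFeval,
      sub_eq_zero]
  rw [ha n hn, hset, hcard, hQdeg]

/-- Rationality of the Artin–Mazur zeta function of an additive polynomial (plus a
constant) whose linear coefficient `f′(0) = a₀` is transcendental over `𝔽_p`:
with `f = g + c` for `g` additive of degree `e ≥ 2` and `a₀ = g.coeff 1 ≠ 0`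
transcendental over `𝔽_p`, `a_n = #Per_n(f) = 1 + #{z : f^[n](z) = z}`, and
`Z ∈ ℚ⟦t⟧` the unique power series with constant coefficient `1` and
`t·Z′ = Z·Σ_{n≥1} a_n tⁿ`, one has `Z·(1 − t)·(1 − e·t) = 1`. -/
theorem zeta_additive_transcendental_coeff_rational
    {k : Type*} [Field k] [IsAlgClosed k] (p : ℕ) [Fact p.Prime] [CharP k p]
    [Algebra (ZMod p) k]
    (g : Polynomial k)
    (hadd : ∀ i : ℕ, g.coeff i ≠ 0 → ∃ j : ℕ, i = p ^ j)
    (hdeg : 2 ≤ g.natDegree) (h0 : g.coeff 1 ≠ 0)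
    (htrans : Transcendental (ZMod p) (g.coeff 1))
    (c : k) (f : Polynomial k) (hf : f = g + Polynomial.C c)
    (a : ℕ → ℕ)
    (ha : ∀ n : ℕ, 1 ≤ n → a n = 1 + Nat.card {z : k | (fun z => f.eval z)^[n] z = z})
    (e : ℕ) (he : e = g.natDegree)
    (Z : PowerSeries ℚ) (hZ1 : PowerSeries.constantCoeff Z = 1)
    (hZ : PowerSeries.X * PowerSeries.derivative ℚ Z
        = Z * PowerSeries.mk (fun n => if n = 0 then 0 else (a n : ℚ))) :
    Z * (1 - PowerSeries.X) * (1 - PowerSeries.C (e : ℚ) * PowerSeries.X) = 1 :=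
  aux_ps e a (aux_count_s14 p g hadd hdeg htrans c f hf a ha e he) Z hZ1 hZ
end

section
/- Let k be an algebraically closed field of characteristic p > 0, let d ≥ 2 be an integer with p ∤ d, and let ψ ∈ k[X] be an additive polynomial (ψ(X) = Σ_i a_i X^{p^i}) with deg ψ ≥ 2 and a_0 ≠ 0. Let f ∈ k[X] be a polynomial satisfying f(X^d) = ψ(X)^d. Assume a_0 is transcendental over the prime field 𝔽_p (equivalently, f′(0) = a_0^d is transcendental over 𝔽_p). For n ≥ 1 set a_n = 1 + #{z ∈ k : f^[n](z) = z}, and let e = deg ψ (= deg f). Then the zeta function Z of the sequence (a_n) — the unique formal power series Z ∈ ℚ⟦t⟧ with constant coefficient 1 satisfying t·Z′ = Z · Σ_{n≥1} a_n tⁿ — satisfies Z · (1 − t) · (1 − e·t) = 1; in particular Z is a rational function. -/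
section
open Polynomial
variable {k : Type*} [Field k] [IsAlgClosed k] [DecidableEq k]

noncomputable def iterComp (ψ : Polynomial k) : ℕ → Polynomial k
  | 0 => X
  | (n+1) => ψ.comp (iterComp ψ n)

lemma eval_iterComp (ψ : Polynomial k) (n : ℕ) (x : k) :
    (iterComp ψ n).eval x = (fun z => ψ.eval z)^[n] x := by
  induction n with
  | zero => simp [iterComp]
  | succ n ih => rw [iterComp, eval_comp, ih, Function.iterate_succ_apply']

lemma natDegree_iterComp (ψ : Polynomial k) (n : ℕ) :
    (iterComp ψ n).natDegree = ψ.natDegree ^ n := by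
  induction n with
  | zero => simp [iterComp]
  | succ n ih => rw [iterComp, natDegree_comp, ih, pow_succ, mul_comm]

lemma derivative_iterComp (ψ : Polynomial k)
    (hψ : derivative ψ = C (ψ.coeff 1)) (n : ℕ) :
    derivative (iterComp ψ n) = C (ψ.coeff 1 ^ n) := by
  induction n with
  | zero => simp [iterComp]
  | succ n ih =>
    rw [iterComp, derivative_comp, ih, hψ, C_comp, ← C_mul, pow_succ, mul_comm]

lemma card_roots_toFinset {q : Polynomial k}
    (hq : q.Separable) : q.roots.toFinset.card = q.natDegree := by
  rw [Multiset.toFinset_card_of_nodup (nodup_roots hq),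
    ← (splits_iff_card_roots).mp (IsAlgClosed.splits q)]

theorem fix_count (p : ℕ) [Fact p.Prime] [CharP k p] [Algebra (ZMod p) k]
    (d : ℕ) (hd : 2 ≤ d) (hpd : ¬ p ∣ d)
    (ψ : Polynomial k)
    (hadd : ∀ i : ℕ, ψ.coeff i ≠ 0 → ∃ j : ℕ, i = p ^ j)
    (hdeg : 2 ≤ ψ.natDegree)
    (htrans : Transcendental (ZMod p) (ψ.coeff 1))
    (f : Polynomial k) (hf : f.comp (Polynomial.X ^ d) = ψ ^ d)
    (n : ℕ) (hn : 1 ≤ n) :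
    Nat.card {z : k | (fun z => f.eval z)^[n] z = z} = ψ.natDegree ^ n := by
  have hp : p.Prime := Fact.out
  set e := ψ.natDegree with he
  set a₀ := ψ.coeff 1 with ha₀
  set P : k → k := fun z => ψ.eval z with hP
  set F : k → k := fun z => f.eval z with hF
  -- basic facts
  have hen : 2 ≤ e ^ n := le_trans hdeg (Nat.le_self_pow (by omega) e)
  have hc0 : ψ.coeff 0 = 0 := by
    by_contra h
    obtain ⟨j, hj⟩ := hadd 0 h
    have := pow_pos hp.pos j
    omega
  have hψ0 : P 0 = 0 := by
    simp only [hP, ← coeff_zero_eq_eval_zero, hc0]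
  have hP0 : P^[n] 0 = 0 := Function.iterate_fixed hψ0 n
  have hψ' : derivative ψ = C a₀ := by
    ext i
    rw [coeff_derivative, coeff_C]
    match i with
    | 0 => simp [ha₀]
    | (i+1) =>
      rw [if_neg (Nat.succ_ne_zero i)]
      by_cases hz : ψ.coeff (i + 1 + 1) = 0
      · simp [hz]
      · obtain ⟨j, hj⟩ := hadd _ hz
        have h00 : ((i + 1 + 1 : ℕ) : k) = 0 := by
          have hj1 : j ≠ 0 := by rintro rfl; simp at hj
          rw [hj]
          exact (CharP.cast_eq_zero_iff k p _).mpr (dvd_pow_self p hj1)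
        push_cast at h00 ⊢
        rw [h00, mul_zero]
  -- semiconjugacy
  have hsc : ∀ x : k, F (x ^ d) = (P x) ^ d := by
    intro x
    have := congrArg (Polynomial.eval x) hf
    simpa [eval_comp] using this
  have hscn : ∀ x : k, F^[n] (x ^ d) = (P^[n] x) ^ d := by
    intro x
    have hsemi : Function.Semiconj (fun x : k => x ^ d) P F := fun x => (hsc x).symm
    exact (hsemi.iterate_right n x).symm
  -- roots of unity
  have hμsep : (X ^ d - 1 : k[X]).Separable := by
    have := separable_X_pow_sub_C' p d (1 : k) hpd one_ne_zero
    rwa [map_one] at this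
  set μ : Finset k := (X ^ d - 1 : k[X]).roots.toFinset with hμ
  have hμne : (X ^ d - 1 : k[X]) ≠ 0 := by
    have := X_pow_sub_C_ne_zero (show 0 < d by omega) (1 : k)
    rwa [map_one] at this
  have hμmem : ∀ ζ : k, ζ ∈ μ ↔ ζ ^ d = 1 := by
    intro ζ
    simp only [hμ, Multiset.mem_toFinset, mem_roots hμne, IsRoot.def, eval_sub, eval_pow,
      eval_X, eval_one, sub_eq_zero]
  have hμcard : μ.card = d := by
    rw [hμ, card_roots_toFinset hμsep]
    have := natDegree_X_pow_sub_C (n := d) (r := (1 : k))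
    rwa [map_one] at this
  -- eigenspaces
  have hVdeg : ∀ ζ : k, (iterComp ψ n - C ζ * X).natDegree = e ^ n := by
    intro ζ
    have h1 : (iterComp ψ n).natDegree = e ^ n := natDegree_iterComp ψ n
    have h2 : (C ζ * X : k[X]).natDegree ≤ 1 := (natDegree_C_mul_le ζ X).trans (by simp)
    have hlt : (C ζ * X : k[X]).natDegree < (iterComp ψ n).natDegree := by omega
    rw [natDegree_sub_eq_left_of_natDegree_lt hlt, h1]
  have hVne : ∀ ζ : k, (iterComp ψ n - C ζ * X) ≠ 0 := by
    intro ζ h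
    have := hVdeg ζ
    rw [h, natDegree_zero] at this
    omega
  set V : k → Finset k := fun ζ => (iterComp ψ n - C ζ * X).roots.toFinset with hV
  have hVmem : ∀ ζ x : k, x ∈ V ζ ↔ P^[n] x = ζ * x := by
    intro ζ x
    simp only [hV, Multiset.mem_toFinset, mem_roots (hVne ζ), IsRoot.def, eval_sub, eval_mul,
      eval_C, eval_X, sub_eq_zero, eval_iterComp, hP]
  have hVcard : ∀ ζ ∈ μ, (V ζ).card = e ^ n := by
    intro ζ hζ
    have hder : derivative (iterComp ψ n - C ζ * X) = C (a₀ ^ n - ζ) := by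
      rw [derivative_sub, derivative_iterComp ψ hψ', derivative_C_mul, derivative_X,
        mul_one, map_sub]
    have hne : a₀ ^ n - ζ ≠ 0 := by
      intro h00
      have hζ1 : ζ ^ d = 1 := (hμmem ζ).mp hζ
      have heq : a₀ ^ n = ζ := sub_eq_zero.mp h00
      refine htrans.pow (show 0 < n by omega) ?_
      refine ⟨X ^ d - 1, ?_, ?_⟩
      · have := X_pow_sub_C_ne_zero (show 0 < d by omega) (1 : ZMod p)
        rwa [map_one] at this
      · simp [heq, hζ1]
    have hsep : (iterComp ψ n - C ζ * X).Separable := by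
      refine ⟨0, C (a₀ ^ n - ζ)⁻¹, ?_⟩
      rw [hder, zero_mul, zero_add, ← C_mul, inv_mul_cancel₀ hne, C_1]
    rw [hV, card_roots_toFinset hsep, hVdeg]
  have h0V : ∀ ζ : k, (0 : k) ∈ V ζ := by
    intro ζ
    rw [hVmem]
    rw [hP0, mul_zero]
  -- the union S of eigenspaces minus 0
  set S : Finset k := μ.biUnion (fun ζ => (V ζ).erase 0) with hS
  have hSmem : ∀ x ∈ S, x ≠ 0 := by
    intro x hx
    rw [hS, Finset.mem_biUnion] at hx
    obtain ⟨ζ, -, hx⟩ := hx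
    exact Finset.ne_of_mem_erase hx
  have key : ∀ x : k, x ≠ 0 → (P^[n] x) ^ d = x ^ d → x ∈ S := by
    intro x hx hxd
    have hxd0 : x ^ d ≠ 0 := pow_ne_zero d hx
    set ζ := P^[n] x / x with hζdef
    have hζx : ζ * x = P^[n] x := div_mul_cancel₀ _ hx
    have hζμ : ζ ∈ μ := by
      rw [hμmem, hζdef, div_pow, hxd, div_self hxd0]
    rw [hS, Finset.mem_biUnion]
    exact ⟨ζ, hζμ, Finset.mem_erase.mpr ⟨hx, (hVmem ζ x).mpr hζx.symm⟩⟩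
  have hScard : S.card = d * (e ^ n - 1) := by
    rw [hS, Finset.card_biUnion]
    · rw [Finset.sum_congr rfl (fun ζ hζ => ?_), Finset.sum_const, hμcard, smul_eq_mul]
      rw [Finset.card_erase_of_mem (h0V ζ), hVcard ζ hζ]
    · intro ζ hζ ζ' hζ' hne
      rw [Function.onFun, Finset.disjoint_left]
      intro x hx hx'
      have hx0 : x ≠ 0 := Finset.ne_of_mem_erase hx
      have h1 := (hVmem ζ x).mp (Finset.mem_of_mem_erase hx)
      have h2 := (hVmem ζ' x).mp (Finset.mem_of_mem_erase hx')
      exact hne (mul_right_cancel₀ hx0 (h1 ▸ h2 ▸ rfl))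
  -- the image T
  set T : Finset k := S.image (· ^ d) with hT
  have hTfix : ∀ z ∈ T, F^[n] z = z := by
    intro z hz
    rw [hT, Finset.mem_image] at hz
    obtain ⟨x, hxS, rfl⟩ := hz
    rw [hS, Finset.mem_biUnion] at hxS
    obtain ⟨ζ, hζμ, hxV⟩ := hxS
    have h1 := (hVmem ζ x).mp (Finset.mem_of_mem_erase hxV)
    rw [hscn, h1, mul_pow, (hμmem ζ).mp hζμ, one_mul]
  have hT0 : (0 : k) ∉ T := by
    intro h
    rw [hT, Finset.mem_image] at h
    obtain ⟨x, hxS, hx⟩ := h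
    have hx0 : x = 0 := (pow_eq_zero_iff (show d ≠ 0 by omega)).mp hx
    exact hSmem x hxS hx0
  have hF0 : F^[n] 0 = 0 := by
    refine Function.iterate_fixed ?_ n
    have := hsc 0
    rw [zero_pow (show d ≠ 0 by omega), hψ0, zero_pow (show d ≠ 0 by omega)] at this
    exact this
  -- the fixed point set equals insert 0 T
  have hFixEq : {z : k | F^[n] z = z} = ((insert (0 : k) T : Finset k) : Set k) := by
    ext z
    simp only [Set.mem_setOf_eq, Finset.coe_insert, Set.mem_insert_iff, Finset.mem_coe]
    constructor
    · intro hz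
      by_cases hz0 : z = 0
      · exact Or.inl hz0
      · refine Or.inr ?_
        obtain ⟨x, rfl⟩ := IsAlgClosed.exists_pow_nat_eq z (show 0 < d by omega)
        have hx0 : x ≠ 0 := by
          intro h; rw [h, zero_pow (show d ≠ 0 by omega)] at hz0; exact hz0 rfl
        have : (P^[n] x) ^ d = x ^ d := by rw [← hscn, hz]
        rw [hT, Finset.mem_image]
        exact ⟨x, key x hx0 this, rfl⟩
    · rintro (rfl | hz)
      · exact hF0
      · exact hTfix z hz
  -- fiber counting: S.card = T.card * d
  have hfiber : ∀ z ∈ T, (S.filter (fun x => x ^ d = z)).card = d := by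
    intro z hz
    obtain ⟨x₀, hx₀S, hx₀⟩ := Finset.mem_image.mp hz
    have hx₀0 : x₀ ≠ 0 := hSmem x₀ hx₀S
    have hfe : S.filter (fun x => x ^ d = z) = μ.image (· * x₀) := by
      ext x
      simp only [Finset.mem_filter, Finset.mem_image]
      constructor
      · rintro ⟨hxS, hxd⟩
        refine ⟨x / x₀, ?_, div_mul_cancel₀ x hx₀0⟩
        rw [hμmem, div_pow, hxd, ← hx₀, div_self (pow_ne_zero d hx₀0)]
      · rintro ⟨ω, hωμ, rfl⟩
        have hω1 : ω ^ d = 1 := (hμmem ω).mp hωμ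
        have hω0 : ω ≠ 0 := by
          intro h; rw [h, zero_pow (show d ≠ 0 by omega)] at hω1; exact one_ne_zero hω1.symm
        have hωd : (ω * x₀) ^ d = z := by rw [mul_pow, hω1, one_mul, hx₀]
        refine ⟨key (ω * x₀) (mul_ne_zero hω0 hx₀0) ?_, hωd⟩
        rw [hωd]
        have : F^[n] z = z := hTfix z hz
        rw [← this, ← hωd, hscn]
    rw [hfe, Finset.card_image_of_injective _ (mul_left_injective₀ hx₀0), hμcard]
  have hST : S.card = T.card * d := by
    rw [Finset.card_eq_sum_card_fiberwise (f := fun x : k => x ^ d) (t := T) (fun x hx => Finset.mem_image_of_mem _ hx),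
      Finset.sum_congr rfl hfiber, Finset.sum_const, smul_eq_mul]
  have hTcard : T.card = e ^ n - 1 := by
    have hd0 : 0 < d := by omega
    have h' : d * (e ^ n - 1) = d * T.card := by rw [← hScard, hST, mul_comm]
    exact (Nat.eq_of_mul_eq_mul_left hd0 h').symm
  -- conclude
  rw [hFixEq, Nat.card_coe_set_eq, Set.ncard_coe_finset,
    Finset.card_insert_of_notMem hT0, hTcard]
  omega
end

section
open PowerSeries

lemma geom_inv (c : ℚ) : (1 - C c * X) * PowerSeries.mk (fun n => c ^ n) = 1 := by
  ext m
  cases m with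
  | zero =>
    simp [sub_mul, mul_assoc, coeff_zero_eq_constantCoeff, map_sub, map_mul]
  | succ m =>
    rw [sub_mul, one_mul, map_sub, mul_assoc, coeff_C_mul, coeff_succ_X_mul, coeff_mk,
      coeff_mk, coeff_one, if_neg (Nat.succ_ne_zero m), pow_succ']
    ring

theorem zeta_eq {e : ℕ} {a : ℕ → ℕ} (hae : ∀ n : ℕ, 1 ≤ n → a n = 1 + e ^ n)
    (Z : PowerSeries ℚ) (hZ1 : PowerSeries.constantCoeff Z = 1)
    (hZ : PowerSeries.X * PowerSeries.derivative ℚ Z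
        = Z * PowerSeries.mk (fun n => if n = 0 then 0 else (a n : ℚ))) :
    Z * (1 - PowerSeries.X) * (1 - PowerSeries.C (e : ℚ) * PowerSeries.X) = 1 := by
  set e' : ℚ := (e : ℚ) with he'
  set A : PowerSeries ℚ := PowerSeries.mk (fun n => if n = 0 then 0 else (a n : ℚ)) with hA0
  set m1 : PowerSeries ℚ := PowerSeries.mk (fun n => (1 : ℚ) ^ n) with hm1
  set mE : PowerSeries ℚ := PowerSeries.mk (fun n => e' ^ n) with hmE
  have hA : A = X * m1 + C e' * X * mE := by
    ext m
    cases m with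
    | zero =>
      simp [hA0, hm1, hmE, coeff_zero_eq_constantCoeff, map_add, map_mul, mul_assoc]
    | succ m =>
      rw [hA0, coeff_mk, if_neg (Nat.succ_ne_zero m), map_add, coeff_succ_X_mul, mul_assoc,
        coeff_C_mul, coeff_succ_X_mul, hm1, hmE, coeff_mk, coeff_mk, one_pow,
        hae (m+1) (by omega)]
      push_cast
      ring
  have h1X : (1 - X) * m1 = 1 := by
    have := geom_inv 1
    simpa [hm1] using this
  have h2X : (1 - C e' * X) * mE = 1 := geom_inv e'
  set B : PowerSeries ℚ := (1 - X) * (1 - C e' * X) with hB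
  have K : A * B = X * (1 - C e' * X) + C e' * X * (1 - X) := by
    rw [hB]
    linear_combination ((1 - X) * (1 - C e' * X)) * hA
      + (X * (1 - C e' * X)) * h1X + (C e' * X * (1 - X)) * h2X
  have h1' : derivative ℚ (1 - X : PowerSeries ℚ) = -1 := by
    rw [map_sub]; simp
  have h2' : derivative ℚ (1 - C e' * X : PowerSeries ℚ) = -(C e') := by
    rw [map_sub, Derivation.leibniz, smul_eq_mul, smul_eq_mul]
    simp
  have hB' : derivative ℚ B = -(1 - C e' * X) - C e' * (1 - X) := by
    rw [hB, Derivation.leibniz, smul_eq_mul, smul_eq_mul, h1', h2']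
    ring
  have hXU : X * derivative ℚ (Z * B) = 0 := by
    rw [Derivation.leibniz, smul_eq_mul, smul_eq_mul, hB']
    linear_combination B * hZ + Z * K
  have hU' : derivative ℚ (Z * B) = 0 := by
    ext m
    have := congrArg (coeff (m + 1)) hXU
    rwa [coeff_succ_X_mul, map_zero] at this
  have hfin : Z * B = 1 := by
    refine PowerSeries.derivative.ext ?_ ?_
    · rw [hU']; simp
    · rw [map_mul, hZ1, hB, map_mul, map_sub, map_sub, map_mul, map_one]
      simp
  rw [mul_assoc, ← hB, hfin]

end



/-- Rationality of the Artin–Mazur zeta function of a subadditive polynomial with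
`f′(0)` transcendental over `𝔽_p`: with `ψ` additive of degree `e ≥ 2`,
`a₀ = ψ.coeff 1 ≠ 0` transcendental over `𝔽_p`, `d ≥ 2` with `p ∤ d`, and `f`
satisfying `f(X^d) = ψ(X)^d`, let `a_n = #Per_n(f) = 1 + #{z : f^[n](z) = z}` and
let `Z ∈ ℚ⟦t⟧` be the unique power series with constant coefficient `1` and
`t·Z′ = Z·Σ_{n≥1} a_n tⁿ`. Then `Z·(1 − t)·(1 − e·t) = 1`. -/
theorem zeta_subadditive_transcendental_coeff_rational
    {k : Type*} [Field k] [IsAlgClosed k] (p : ℕ) [Fact p.Prime] [CharP k p]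
    [Algebra (ZMod p) k]
    (d : ℕ) (hd : 2 ≤ d) (hpd : ¬ p ∣ d)
    (ψ : Polynomial k)
    (hadd : ∀ i : ℕ, ψ.coeff i ≠ 0 → ∃ j : ℕ, i = p ^ j)
    (hdeg : 2 ≤ ψ.natDegree) (h0 : ψ.coeff 1 ≠ 0)
    (htrans : Transcendental (ZMod p) (ψ.coeff 1))
    (f : Polynomial k) (hf : f.comp (Polynomial.X ^ d) = ψ ^ d)
    (a : ℕ → ℕ)
    (ha : ∀ n : ℕ, 1 ≤ n → a n = 1 + Nat.card {z : k | (fun z => f.eval z)^[n] z = z})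
    (e : ℕ) (he : e = ψ.natDegree)
    (Z : PowerSeries ℚ) (hZ1 : PowerSeries.constantCoeff Z = 1)
    (hZ : PowerSeries.X * PowerSeries.derivative ℚ Z
        = Z * PowerSeries.mk (fun n => if n = 0 then 0 else (a n : ℚ))) :
    Z * (1 - PowerSeries.X) * (1 - PowerSeries.C (e : ℚ) * PowerSeries.X) = 1 := by
  classical
  have hae : ∀ n : ℕ, 1 ≤ n → a n = 1 + e ^ n := by
    intro n hn
    rw [ha n hn, fix_count p d hd hpd ψ hadd hdeg htrans f hf n hn, he]
  exact zeta_eq hae Z hZ1 hZ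
end

section
/- Let k be an algebraically closed field of characteristic p > 0, let g ∈ k[X] be an additive polynomial (g(X) = Σ_i a_i X^{p^i}) with deg g ≥ 2, and assume the coefficient a_0 of X in g is transcendental over the prime field 𝔽_p. Let c ∈ k and f(X) = g(X) + c. Then for every n ≥ 1, the number of elements z ∈ k with f^[n](z) = z is exactly (deg g)ⁿ. -/
open Polynomial


/-- If `g` is an additive polynomial of degree `≥ 2` over an algebraically closed
field of characteristic `p > 0` whose linear coefficient `a₀ = g.coeff 1` is
transcendental over `𝔽_p`, and `f = g + c`, then for every `n ≥ 1` the number of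
`z ∈ k` with `f^[n](z) = z` is exactly `(deg g)ⁿ`. -/
theorem additive_transcendental_periodic_count
    {k : Type*} [Field k] [IsAlgClosed k] (p : ℕ) [Fact p.Prime] [CharP k p]
    [Algebra (ZMod p) k]
    (g : Polynomial k)
    (hadd : ∀ i : ℕ, g.coeff i ≠ 0 → ∃ j : ℕ, i = p ^ j)
    (hdeg : 2 ≤ g.natDegree)
    (htrans : Transcendental (ZMod p) (g.coeff 1))
    (c : k) (f : Polynomial k) (hf : f = g + Polynomial.C c)
    (n : ℕ) (hn : 1 ≤ n) :
    Nat.card {z : k | (fun z => f.eval z)^[n] z = z} = g.natDegree ^ n := by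
  classical
  set a : k := g.coeff 1 with ha
  -- derivative of g is C a
  have hderg : derivative g = C a := by
    ext m
    rw [coeff_derivative, coeff_C]
    rcases m with _ | m
    · simp [ha]
    · simp only [Nat.succ_ne_zero, if_false]
      by_cases h : g.coeff (m + 1 + 1) = 0
      · simp [h]
      · obtain ⟨j, hj⟩ := hadd _ h
        have hj0 : j ≠ 0 := by
          rintro rfl; simp at hj
        have hz : ((m + 1 + 1 : ℕ) : k) = 0 := by
          rw [hj, Nat.cast_pow, CharP.cast_eq_zero k p, zero_pow hj0]
        push_cast at hz ⊢
        rw [hz, mul_zero]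
  have hdf : derivative f = C a := by rw [hf, derivative_add, derivative_C, add_zero, hderg]
  have hfdeg : f.natDegree = g.natDegree := by rw [hf]; exact natDegree_add_C
  -- iterated composition polynomial
  set P : ℕ → k[X] := fun m => (fun q => f.comp q)^[m] X with hP
  have hPsucc : ∀ m, P (m + 1) = f.comp (P m) := fun m => Function.iterate_succ_apply' _ m X
  have hPeval : ∀ m z, (P m).eval z = (fun z => f.eval z)^[m] z := by
    intro m
    induction m with
    | zero => intro z; simp [hP]
    | succ m ih =>
        intro z
        rw [hPsucc, eval_comp, ih, Function.iterate_succ_apply']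
  have hPdeg : ∀ m, (P m).natDegree = g.natDegree ^ m := by
    intro m
    induction m with
    | zero => simp [hP]
    | succ m ih => rw [hPsucc, natDegree_comp, ih, hfdeg, pow_succ, mul_comm]
  have hPder : ∀ m, derivative (P m) = C (a ^ m) := by
    intro m
    induction m with
    | zero => simp [hP]
    | succ m ih =>
        rw [hPsucc, derivative_comp, ih, hdf, C_comp, ← C_mul, pow_succ, mul_comm]
  set F : k[X] := P n - X with hF
  have h1lt : 1 < g.natDegree ^ n :=
    lt_of_lt_of_le (Nat.one_lt_two_pow (by omega)) (Nat.pow_le_pow_left hdeg n)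
  have hFdeg : F.natDegree = g.natDegree ^ n := by
    rw [hF, natDegree_sub_eq_left_of_natDegree_lt, hPdeg]
    rw [natDegree_X, hPdeg]; exact h1lt
  have hF0 : F ≠ 0 := fun h => by simp [h] at hFdeg; omega
  -- the constant a^n - 1 is nonzero
  have hu : a ^ n - 1 ≠ 0 := by
    intro h
    apply htrans
    refine ⟨X ^ n - 1, ?_, ?_⟩
    · have := X_pow_sub_C_ne_zero (R := ZMod p) (by omega : 0 < n) 1
      simpa using this
    · simp [sub_eq_zero.mp h]
  have hFder : derivative F = C (a ^ n - 1) := by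
    rw [hF, derivative_sub, derivative_X, hPder, map_sub, map_one]
  have hsep : F.Separable := by
    rw [Polynomial.Separable, hFder]
    exact ⟨0, C (a ^ n - 1)⁻¹, by
      rw [zero_mul, zero_add, ← C_mul, inv_mul_cancel₀ hu, map_one]⟩
  have hnodup : F.roots.Nodup := F.nodup_roots hsep
  have hcard : F.roots.card = g.natDegree ^ n := by
    rw [(splits_iff_card_roots).mp (IsAlgClosed.splits F), hFdeg]
  have hset : {z : k | (fun z => f.eval z)^[n] z = z} = ↑F.roots.toFinset := by
    ext z
    simp only [Set.mem_setOf_eq, Finset.coe_sort_coe, Multiset.mem_toFinset,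
      Finset.mem_coe, mem_roots hF0, IsRoot.def]
    rw [show F = P n - X from rfl, eval_sub, eval_X, hPeval, sub_eq_zero]
  rw [hset, Nat.card_coe_set_eq, Set.ncard_coe_finset, Multiset.toFinset_card_of_nodup hnodup,
    hcard]
end
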